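/- arXiv:2306.11599 — 2 statements merged into one kernel-verified Lean document; each statement's English description precedes it below -/
import Mathlib

section
/- (Without assuming the initial σ-algebra F_0 is trivial.) Suppose the global market K satisfies NA, i.e. K ∩ L^0_+(Ω,F_T,P) = {0}. Let (k_n)_n ⊆ K, let (Z_n)_n be F_0-measurable real random variables and (W_n)_n be F_T-measurable real random variables such that k_n + Z_n ≥ W_n P-a.s. for every n, and W_n → W_∞ P-a.s. for some F_T-measurable W_∞. Then inf_n Z_n > −∞ P-a.s. -/
open MeasureTheory Filter
open scoped ENNReal

noncomputable section

section AuxSection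
open scoped Classical

namespace CollectiveAux

variable {Ω : Type*}

/-- compose a measurable `ℕ`-index with a family of measurable functions -/
lemma measurable_paste {α : Type*} [MeasurableSpace α] {m : MeasurableSpace Ω}
    (f : ℕ → Ω → α) (hf : ∀ n, Measurable[m] (f n)) (ν : Ω → ℕ) (hν : Measurable[m] ν) :
    Measurable[m] (fun ω => f (ν ω) ω) := by
  intro s hs
  have : (fun ω => f (ν ω) ω) ⁻¹' s = ⋃ n, (ν ⁻¹' {n} ∩ (f n) ⁻¹' s) := by
    ext ω
    simp only [Set.mem_preimage, Set.mem_iUnion, Set.mem_inter_iff, Set.mem_singleton_iff]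
    exact ⟨fun h => ⟨ν ω, rfl, h⟩, fun ⟨n, hn, h⟩ => by rw [hn]; exact h⟩
  rw [this]
  exact MeasurableSet.iUnion fun n => (hν (measurableSet_singleton n)).inter (hf n hs)

lemma measurable_dfind {m : MeasurableSpace Ω} (p : ℕ → Ω → Prop)
    [∀ ω, DecidablePred (p · ω)] [∀ ω, Decidable (∃ n, p n ω)]
    (hp : ∀ n, MeasurableSet[m] {ω | p n ω}) (d : Ω → ℕ) (hd : Measurable[m] d) :
    Measurable[m] (fun ω => if h : ∃ n, p n ω then Nat.find h else d ω) := by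
  classical
  apply measurable_to_countable'
  intro n
  have : (fun ω => if h : ∃ n, p n ω then Nat.find h else d ω) ⁻¹' {n}
      = ({ω | p n ω} ∩ ⋂ i ∈ Finset.range n, {ω | p i ω}ᶜ)
        ∪ ((⋂ i, {ω | p i ω}ᶜ) ∩ d ⁻¹' {n}) := by
    ext ω
    by_cases h : ∃ k, p k ω
    · simp only [Set.mem_preimage, Set.mem_singleton_iff, dif_pos h, Set.mem_union,
        Set.mem_inter_iff, Set.mem_iInter, Set.mem_compl_iff, Set.mem_setOf_eq, Finset.mem_range]
      constructor
      · rintro rfl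
        exact Or.inl ⟨Nat.find_spec h, fun i hi => Nat.find_min h hi⟩
      · rintro (⟨h1, h2⟩ | ⟨h1, _⟩)
        · exact (Nat.find_eq_iff h).2 ⟨h1, fun i hi => h2 i hi⟩
        · exact absurd (h.choose_spec) (h1 h.choose)
    · simp only [Set.mem_preimage, Set.mem_singleton_iff, dif_neg h, Set.mem_union,
        Set.mem_inter_iff, Set.mem_iInter, Set.mem_compl_iff, Set.mem_setOf_eq]
      push_neg at h
      constructor
      · intro hd'; exact Or.inr ⟨fun i => h i, hd'⟩
      · rintro (⟨h1, _⟩ | ⟨_, h2⟩)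
        · exact absurd h1 (h n)
        · exact h2
  rw [this]
  exact ((hp n).inter (MeasurableSet.biInter (Set.to_countable _)
      (fun i _ => (hp i).compl))).union
    ((MeasurableSet.iInter (fun i => (hp i).compl)).inter (hd (measurableSet_singleton n)))

/-- iterated selection of indices satisfying stage-dependent predicates -/
def sel (p : ℕ → ℕ → Ω → Prop) : ℕ → Ω → ℕ
  | 0 => fun ω => if h : ∃ n, p 0 n ω then Nat.find h else 0
  | (k+1) => fun ω =>
      if h : ∃ n, sel p k ω < n ∧ p (k+1) n ω then Nat.find h else sel p k ω + 1

lemma sel_spec (p : ℕ → ℕ → Ω → Prop) (ω : Ω)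
    (hfreq : ∀ k M, ∃ n, M ≤ n ∧ p k n ω) (k : ℕ) : p k (sel p k ω) ω := by
  cases k with
  | zero =>
    have h : ∃ n, p 0 n ω := (hfreq 0 0).imp fun n hn => hn.2
    simp only [sel, dif_pos h]
    exact Nat.find_spec h
  | succ k =>
    have h : ∃ n, sel p k ω < n ∧ p (k+1) n ω := by
      obtain ⟨n, hn, hp'⟩ := hfreq (k+1) (sel p k ω + 1)
      exact ⟨n, hn, hp'⟩
    simp only [sel, dif_pos h]
    exact (Nat.find_spec h).2

lemma sel_lt_succ (p : ℕ → ℕ → Ω → Prop) (ω : Ω)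
    (hfreq : ∀ k M, ∃ n, M ≤ n ∧ p k n ω) (k : ℕ) :
    sel p k ω < sel p (k+1) ω := by
  have h : ∃ n, sel p k ω < n ∧ p (k+1) n ω := by
    obtain ⟨n, hn, hp'⟩ := hfreq (k+1) (sel p k ω + 1)
    exact ⟨n, hn, hp'⟩
  simp only [sel, dif_pos h]
  exact (Nat.find_spec h).1

lemma sel_measurable {m : MeasurableSpace Ω} (p : ℕ → ℕ → Ω → Prop)
    (hp : ∀ k n, MeasurableSet[m] {ω | p k n ω}) (k : ℕ) :
    Measurable[m] (sel p k) := by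
  induction k with
  | zero => exact measurable_dfind _ (hp 0) _ measurable_const
  | succ k ih =>
    have : Measurable[m] (fun ω =>
        if h : ∃ n, sel p k ω < n ∧ p (k+1) n ω then Nat.find h else sel p k ω + 1) := by
      apply measurable_dfind (fun n ω => sel p k ω < n ∧ p (k+1) n ω)
      · intro n
        have : {ω | sel p k ω < n ∧ p (k+1) n ω}
            = (sel p k) ⁻¹' (Set.Iio n) ∩ {ω | p (k+1) n ω} := rfl
        rw [this]
        exact (ih measurableSet_Iio).inter (hp _ n)
      · exact ih.add (@measurable_const ℕ Ω _ m 1)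
    have e : (fun ω => if h : ∃ n, sel p k ω < n ∧ p (k + 1) n ω then Nat.find h
        else sel p k ω + 1) = sel p (k+1) := by
      funext ω; simp only [sel]
    exact e ▸ this


/-- scalar refinement: extract a measurable random subsequence along which `u` converges
pointwise, given a pointwise bound. -/
lemma exists_sel_tendsto {m : MeasurableSpace Ω} (u : ℕ → Ω → ℝ)
    (hu : ∀ n, Measurable[m] (u n)) (β : Ω → ℝ) (hb : ∀ n ω, |u n ω| ≤ β ω) :
    ∃ (ρ : ℕ → Ω → ℕ) (c : Ω → ℝ), (∀ k, Measurable[m] (ρ k)) ∧ Measurable[m] c ∧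
      (∀ ω k, ρ k ω < ρ (k+1) ω) ∧
      (∀ ω, Tendsto (fun k => u (ρ k ω) ω) atTop (nhds (c ω))) := by
  classical
  have hLmeas : Measurable[m] (fun ω => liminf (fun n => ((u n ω : ℝ) : EReal)) atTop) := by
    have e : (fun ω => liminf (fun n => ((u n ω : ℝ) : EReal)) atTop)
        = fun ω => ⨆ n, ⨅ k, ((u (k + n) ω : ℝ) : EReal) := by
      funext ω
      exact liminf_eq_iSup_iInf_of_nat'
    rw [e]
    exact Measurable.iSup (fun n => Measurable.iInf (fun k => (hu (k + n)).coe_real_ereal))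
  set c : Ω → ℝ := fun ω => (liminf (fun n => ((u n ω : ℝ) : EReal)) atTop).toReal with hc
  have hcmeas : Measurable[m] c := hLmeas.ereal_toReal
  have hLreal : ∀ ω, liminf (fun n => ((u n ω : ℝ) : EReal)) atTop = ((c ω : ℝ) : EReal) := by
    intro ω
    have h1 : ((-β ω : ℝ) : EReal) ≤ liminf (fun n => ((u n ω : ℝ) : EReal)) atTop :=
      le_liminf_of_le (by isBoundedDefault)
        (Filter.Eventually.of_forall fun n => by exact_mod_cast (abs_le.1 (hb n ω)).1)
    have h2 : liminf (fun n => ((u n ω : ℝ) : EReal)) atTop ≤ ((β ω : ℝ) : EReal) :=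
      le_trans liminf_le_limsup
        (limsup_le_of_le (by isBoundedDefault)
          (Filter.Eventually.of_forall fun n => by exact_mod_cast (abs_le.1 (hb n ω)).2))
    have hbot : liminf (fun n => ((u n ω : ℝ) : EReal)) atTop ≠ ⊥ := fun h => by
      rw [h] at h1; exact absurd h1 (by simp)
    have htop : liminf (fun n => ((u n ω : ℝ) : EReal)) atTop ≠ ⊤ := fun h => by
      rw [h] at h2; exact absurd h2 (by simp)
    exact (EReal.coe_toReal htop hbot).symm
  have hfreq : ∀ ω, ∀ ε : ℝ, 0 < ε → ∀ M, ∃ n, M ≤ n ∧ |u n ω - c ω| < ε := by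
    intro ω ε hε
    have h1 : ∀ᶠ n in atTop, ((c ω - ε : ℝ) : EReal) < ((u n ω : ℝ) : EReal) :=
      eventually_lt_of_lt_liminf
        (by rw [hLreal ω]; exact_mod_cast (by linarith : c ω - ε < c ω)) (by isBoundedDefault)
    have h2 : ∃ᶠ n in atTop, ((u n ω : ℝ) : EReal) < ((c ω + ε : ℝ) : EReal) :=
      frequently_lt_of_liminf_lt (by isBoundedDefault)
        (by rw [hLreal ω]; exact_mod_cast (by linarith : c ω < c ω + ε))
    have h3 : ∃ᶠ n in atTop, |u n ω - c ω| < ε := by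
      apply (h2.and_eventually h1).mono
      rintro n ⟨ha, hb'⟩
      rw [abs_lt]
      have e1 : c ω - ε < u n ω := by exact_mod_cast hb'
      have e2 : u n ω < c ω + ε := by exact_mod_cast ha
      constructor <;> linarith
    exact fun M => frequently_atTop.1 h3 M
  set p : ℕ → ℕ → Ω → Prop := fun k n ω => |u n ω - c ω| < 1 / (k + 1) with hp
  have hfreq' : ∀ ω k M, ∃ n, M ≤ n ∧ p k n ω := fun ω k M =>
    hfreq ω (1 / (k + 1)) (by positivity) M
  refine ⟨sel p, c, ?_, hcmeas, ?_, ?_⟩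
  · intro k
    apply sel_measurable
    intro k' n
    have e : {ω | p k' n ω} = (fun ω => |u n ω - c ω|) ⁻¹' (Set.Iio (1 / (k' + 1))) := rfl
    rw [e]
    exact ((hu n).sub hcmeas).abs measurableSet_Iio
  · exact fun ω k => sel_lt_succ p ω (fun k M => hfreq' ω k M) k
  · intro ω
    rw [Metric.tendsto_atTop]
    intro ε hε
    obtain ⟨K, hK⟩ := exists_nat_one_div_lt hε
    refine ⟨K, fun k hk => ?_⟩
    have hs := sel_spec p ω (fun k M => hfreq' ω k M) k
    rw [hp] at hs
    simp only [Real.dist_eq]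
    calc |u (sel p k ω) ω - c ω| < 1 / (k + 1) := hs
    _ ≤ 1 / (K + 1) := by
        apply one_div_le_one_div_of_le
        · positivity
        · exact_mod_cast Nat.succ_le_succ hk
    _ < ε := hK

/-- vector version: coordinates indexed `j < D`. -/
lemma exists_sel_tendsto_vec {m : MeasurableSpace Ω} (D : ℕ) (u : ℕ → ℕ → Ω → ℝ)
    (hu : ∀ j n, Measurable[m] (u j n)) (β : Ω → ℝ) (hb : ∀ j n ω, |u j n ω| ≤ β ω) :
    ∃ (ρ : ℕ → Ω → ℕ) (c : ℕ → Ω → ℝ), (∀ k, Measurable[m] (ρ k)) ∧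
      (∀ j, Measurable[m] (c j)) ∧ (∀ ω k, ρ k ω < ρ (k+1) ω) ∧
      (∀ j, j < D → ∀ ω, Tendsto (fun k => u j (ρ k ω) ω) atTop (nhds (c j ω))) := by
  induction D with
  | zero =>
    exact ⟨fun k _ => k, fun _ _ => 0, fun k => measurable_const,
      fun _ => measurable_const, fun ω k => Nat.lt_succ_self k, fun j hj => by omega⟩
  | succ D ih =>
    obtain ⟨ρ, c, hρm, hcm, hρlt, hconv⟩ := ih
    have hsm : ∀ ω, StrictMono (fun k => ρ k ω) := fun ω =>
      strictMono_nat_of_lt_succ (hρlt ω)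
    obtain ⟨ρ', cD, hρ'm, hcDm, hρ'lt, hconv'⟩ := exists_sel_tendsto
      (fun n ω => u D (ρ n ω) ω)
      (fun n => measurable_paste (fun i => u D i) (hu D) (ρ n) (hρm n)) β
      (fun n ω => hb D (ρ n ω) ω)
    have hsm' : ∀ ω, StrictMono (fun k => ρ' k ω) := fun ω =>
      strictMono_nat_of_lt_succ (hρ'lt ω)
    refine ⟨fun k ω => ρ (ρ' k ω) ω, fun j => if j = D then cD else c j, ?_, ?_, ?_, ?_⟩
    · exact fun k => measurable_paste (fun i ω => ρ i ω) hρm (ρ' k) (hρ'm k)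
    · intro j
      by_cases h : j = D
      · simpa [h] using hcDm
      · simpa [h] using hcm j
    · exact fun ω k => (hsm ω) (hρ'lt ω k)
    · intro j hj ω
      by_cases h : j = D
      · subst h
        simp only [if_pos rfl]
        exact hconv' ω
      · simp only [if_neg h]
        have hjD : j < D := by omega
        have h1 : Tendsto (fun k => ρ' k ω) atTop atTop :=
          tendsto_atTop_mono (fun k => (hsm' ω).le_apply) tendsto_id
        exact (hconv j hjD ω).comp h1


/-- abstract structural properties of a set of attainable gains -/
structure GoodK (m : MeasurableSpace Ω) (K : Set (Ω → ℝ)) : Prop where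
  zero : (fun _ => (0:ℝ)) ∈ K
  add : ∀ k₁ ∈ K, ∀ k₂ ∈ K, (fun ω => k₁ ω + k₂ ω) ∈ K
  smul : ∀ φ : Ω → ℝ, Measurable[m] φ → ∀ k ∈ K, (fun ω => φ ω * k ω) ∈ K
  paste : ∀ k : ℕ → Ω → ℝ, (∀ n, k n ∈ K) → ∀ ν : Ω → ℕ, Measurable[m] ν →
    (fun ω => k (ν ω) ω) ∈ K

lemma GoodK.sumMem {m : MeasurableSpace Ω} {K : Set (Ω → ℝ)} (hK : GoodK m K)
    {ι : Type*} (s : Finset ι) (f : ι → Ω → ℝ) (hf : ∀ i ∈ s, f i ∈ K) :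
    (fun ω => ∑ i ∈ s, f i ω) ∈ K := by
  classical
  induction s using Finset.induction with
  | empty => simpa using hK.zero
  | insert a t hx ih =>
    have : (fun ω => ∑ i ∈ insert a t, f i ω) = fun ω => f a ω + ∑ i ∈ t, f i ω := by
      funext ω; rw [Finset.sum_insert hx]
    rw [this]
    exact hK.add _ (hf a (Finset.mem_insert_self a t)) _
      (ih fun i hi => hf i (Finset.mem_insert_of_mem hi))

/-- closedness under a.e. domination and a.e. convergence -/
def ClosedKP {m0 : MeasurableSpace Ω} (P : Measure Ω) (K : Set (Ω → ℝ)) : Prop :=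
  ∀ g : ℕ → Ω → ℝ, ∀ gl : Ω → ℝ,
    (∀ n, ∃ k ∈ K, ∀ᵐ ω ∂P, g n ω ≤ k ω) →
    (∀ᵐ ω ∂P, Tendsto (fun n => g n ω) atTop (nhds (gl ω))) →
    ∃ k ∈ K, ∀ᵐ ω ∂P, gl ω ≤ k ω

section Step

variable {m0 : MeasurableSpace Ω} (P : Measure Ω) (m : MeasurableSpace Ω)
  {J : ℕ} (Y : Fin J → Ω → ℝ) (K : Set (Ω → ℝ))

/-- Case A of the inductive step: on the set where the strategies have a
pointwise bounded subsequence. -/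
lemma caseA (hK : GoodK m K) (hcl : ClosedKP P K)
    (g : ℕ → Ω → ℝ) (gl : Ω → ℝ) (ξ : ℕ → Fin J → Ω → ℝ) (k : ℕ → Ω → ℝ)
    (hξm : ∀ n j, Measurable[m] (ξ n j)) (hkK : ∀ n, k n ∈ K)
    (hgle : ∀ n, ∀ᵐ ω ∂P, g n ω ≤ (∑ j, ξ n j ω * Y j ω) + k n ω)
    (hconv : ∀ᵐ ω ∂P, Tendsto (fun n => g n ω) atTop (nhds (gl ω)))
    (A : Set Ω) (hA : MeasurableSet[m] A)
    (hfreq : ∀ ω ∈ A, ∃ q : ℕ, ∀ M, ∃ n, M ≤ n ∧ (∑ j, |ξ n j ω|) ≤ (q:ℝ)) :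
    ∃ ξ' : Fin J → Ω → ℝ, (∀ j, Measurable[m] (ξ' j)) ∧ ∃ k' ∈ K,
      ∀ᵐ ω ∂P, A.indicator (fun _ => (1:ℝ)) ω * gl ω ≤ (∑ j, ξ' j ω * Y j ω) + k' ω := by
  classical
  set indA : Ω → ℝ := A.indicator (fun _ => (1:ℝ)) with hindA
  have hindAm : Measurable[m] indA := measurable_const.indicator hA
  have hindA_nonneg : ∀ ω, 0 ≤ indA ω :=
    fun ω => Set.indicator_nonneg (fun _ _ => zero_le_one) ω
  set b : ℕ → Ω → ℝ := fun n ω => ∑ j, |ξ n j ω| with hbdef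
  have hbm : ∀ n, Measurable[m] (b n) :=
    fun n => Finset.measurable_sum _ (fun j _ => (hξm n j).abs)
  set bh : ℕ → Ω → ℝ := fun n => A.indicator (b n) with hbh
  have hbhm : ∀ n, Measurable[m] (bh n) := fun n => (hbm n).indicator hA
  have hbh_freq : ∀ ω, ∃ q : ℕ, ∀ M, ∃ n, M ≤ n ∧ bh n ω ≤ (q:ℝ) := by
    intro ω
    by_cases hω : ω ∈ A
    · obtain ⟨q, hq⟩ := hfreq ω hω
      refine ⟨q, fun M => (hq M).imp fun n hn => ⟨hn.1, ?_⟩⟩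
      simpa only [hbh, Set.indicator_of_mem hω] using hn.2
    · exact ⟨0, fun M => ⟨M, le_refl M, by simp [hbh, Set.indicator_of_notMem hω]⟩⟩
  set β : Ω → ℕ := fun ω =>
    if h : ∃ q : ℕ, ∀ M, ∃ n, M ≤ n ∧ bh n ω ≤ (q:ℝ) then Nat.find h else 0 with hβ
  have hβspec : ∀ ω, ∀ M, ∃ n, M ≤ n ∧ bh n ω ≤ (β ω : ℝ) := by
    intro ω
    have : β ω = Nat.find (hbh_freq ω) := by rw [hβ]; exact dif_pos (hbh_freq ω)
    rw [this]
    exact Nat.find_spec (hbh_freq ω)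
  have hβm : Measurable[m] β := by
    rw [hβ]
    refine measurable_dfind (fun q ω => ∀ M, ∃ n, M ≤ n ∧ bh n ω ≤ (q:ℝ)) ?_ _
      (@measurable_const ℕ Ω _ m 0)
    intro q
    have e : {ω | ∀ M, ∃ n, M ≤ n ∧ bh n ω ≤ (q:ℝ)}
        = ⋂ M, ⋃ n, ({ω | M ≤ n} ∩ {ω | bh n ω ≤ (q:ℝ)}) := by
      ext ω; simp [Set.mem_iInter, Set.mem_iUnion, Set.mem_setOf_eq]
    rw [e]
    exact MeasurableSet.iInter fun M => MeasurableSet.iUnion fun n =>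
      (MeasurableSet.const _).inter (measurableSet_le (hbhm n) measurable_const)
  have hβRm : Measurable[m] (fun ω => (β ω : ℝ)) :=
    measurable_paste (fun q (_ : Ω) => ((q : ℕ) : ℝ)) (fun q => measurable_const) β hβm
  set ν : ℕ → Ω → ℕ := sel (fun _ n ω => bh n ω ≤ (β ω : ℝ)) with hν
  have hνm : ∀ k', Measurable[m] (ν k') := by
    intro k'; rw [hν]
    exact sel_measurable _ (fun _ n => measurableSet_le (hbhm n) hβRm) k'
  have hνlt : ∀ ω k', ν k' ω < ν (k'+1) ω := by
    intro ω k'; rw [hν]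
    exact sel_lt_succ (fun _ n ω => bh n ω ≤ (β ω : ℝ)) ω (fun _ M => hβspec ω M) k'
  have hνspec : ∀ ω k', bh (ν k' ω) ω ≤ (β ω : ℝ) := by
    intro ω k'; rw [hν]
    exact sel_spec (fun _ n ω => bh n ω ≤ (β ω : ℝ)) ω (fun _ M => hβspec ω M) k'
  set xh : ℕ → Fin J → Ω → ℝ := fun n j ω => indA ω * ξ n j ω with hxh
  have hxhm : ∀ n j, Measurable[m] (xh n j) := fun n j => hindAm.mul (hξm n j)
  have hxh_le : ∀ n j ω, |xh n j ω| ≤ bh n ω := by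
    intro n j ω
    by_cases hω : ω ∈ A
    · simp only [hxh, hbh, hindA, Set.indicator_of_mem hω, one_mul]
      exact Finset.single_le_sum (f := fun j' => |ξ n j' ω|)
        (fun j' _ => abs_nonneg _) (Finset.mem_univ j)
    · simp [hxh, hbh, hindA, Set.indicator_of_notMem hω]
  obtain ⟨ρ, c, hρm, hcm, hρlt, hcconv⟩ := exists_sel_tendsto_vec (m := m) J
    (fun j n ω => if h : j < J then xh (ν n ω) ⟨j, h⟩ ω else 0)
    (fun j n => by
      by_cases h : j < J
      · simp only [dif_pos h]
        exact measurable_paste (fun i ω => xh i ⟨j, h⟩ ω) (fun i => hxhm i _) (ν n) (hνm n)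
      · simp only [dif_neg h]; exact measurable_const)
    (fun ω => (β ω : ℝ))
    (fun j n ω => by
      by_cases h : j < J
      · simp only [dif_pos h]; exact le_trans (hxh_le _ _ ω) (hνspec ω n)
      · simp only [dif_neg h, abs_zero]; exact Nat.cast_nonneg (β ω))
  set τ : ℕ → Ω → ℕ := fun k' ω => ν (ρ k' ω) ω with hτ
  have hτm : ∀ k', Measurable[m] (τ k') :=
    fun k' => measurable_paste (fun i ω => ν i ω) hνm (ρ k') (hρm k')
  have hτsm : ∀ ω, StrictMono (fun k' => τ k' ω) := by
    intro ω
    have hνsm : StrictMono (fun i => ν i ω) := strictMono_nat_of_lt_succ (fun i => hνlt ω i)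
    have hρsm : StrictMono (fun i => ρ i ω) := strictMono_nat_of_lt_succ (fun i => hρlt ω i)
    exact fun a b hab => hνsm (hρsm hab)
  have hτtend : ∀ ω, Tendsto (fun k' => τ k' ω) atTop atTop :=
    fun ω => tendsto_atTop_mono (fun k' => (hτsm ω).le_apply) tendsto_id
  have hxhconv : ∀ (j : Fin J) ω,
      Tendsto (fun k' => xh (τ k' ω) j ω) atTop (nhds (c j.val ω)) := by
    intro j ω
    have h := hcconv j.val j.isLt ω
    simp only [dif_pos j.isLt, Fin.eta] at h
    exact h
  set cF : Fin J → Ω → ℝ := fun j => c j.val with hcF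
  have key := hcl (fun k' ω => indA ω * g (τ k' ω) ω - ∑ j, xh (τ k' ω) j ω * Y j ω)
    (fun ω => indA ω * gl ω - ∑ j, cF j ω * Y j ω) ?hyp ?conv
  case hyp =>
    intro k'
    refine ⟨fun ω => indA ω * k (τ k' ω) ω,
      hK.paste (fun n ω => indA ω * k n ω)
        (fun n => hK.smul indA hindAm (k n) (hkK n)) (τ k') (hτm k'), ?_⟩
    have hgleAll : ∀ᵐ ω ∂P, ∀ n, g n ω ≤ (∑ j, ξ n j ω * Y j ω) + k n ω := ae_all_iff.2 hgle
    refine hgleAll.mono fun ω hω => ?_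
    show indA ω * g (τ k' ω) ω - (∑ j, xh (τ k' ω) j ω * Y j ω) ≤ indA ω * k (τ k' ω) ω
    have h := hω (τ k' ω)
    have hmul := mul_le_mul_of_nonneg_left h (hindA_nonneg ω)
    have eS : indA ω * ((∑ j, ξ (τ k' ω) j ω * Y j ω) + k (τ k' ω) ω)
        = (∑ j, xh (τ k' ω) j ω * Y j ω) + indA ω * k (τ k' ω) ω := by
      rw [mul_add, Finset.mul_sum]
      congr 1
      exact Finset.sum_congr rfl fun j _ => (mul_assoc _ _ _).symm
    rw [eS] at hmul
    linarith
  case conv =>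
    refine hconv.mono fun ω hω => ?_
    refine Tendsto.sub ?_ ?_
    · exact (hω.comp (hτtend ω)).const_mul (indA ω)
    · exact tendsto_finset_sum _ (fun j _ => (hxhconv j ω).mul_const (Y j ω))
  obtain ⟨kA, hkAK, hleA⟩ := key
  refine ⟨cF, fun j => hcm j.val, kA, hkAK, hleA.mono fun ω h => ?_⟩
  have h' : indA ω * gl ω - (∑ j, cF j ω * Y j ω) ≤ kA ω := h
  linarith


/-- The key inductive step: closedness is preserved when adding one trading period. -/
lemma step_closed (hK : GoodK m K) (hcl : ClosedKP P K)
    (hna : ∀ ξ : Fin J → Ω → ℝ, (∀ j, Measurable[m] (ξ j)) → ∀ k ∈ K,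
      (∀ᵐ ω ∂P, 0 ≤ (∑ j, ξ j ω * Y j ω) + k ω) →
      (∀ᵐ ω ∂P, (∑ j, ξ j ω * Y j ω) + k ω = 0)) :
    ClosedKP P {f | ∃ ξ : Fin J → Ω → ℝ, (∀ j, Measurable[m] (ξ j)) ∧
      ∃ k ∈ K, f = fun ω => (∑ j, ξ j ω * Y j ω) + k ω} := by
  classical
  suffices H : ∀ (N : ℕ) (s : Finset (Fin J)), s.card ≤ N →
      ∀ (g : ℕ → Ω → ℝ) (gl : Ω → ℝ),
      (∀ n, ∃ ξ : Fin J → Ω → ℝ, (∀ j, Measurable[m] (ξ j)) ∧ (∀ j, j ∉ s → ∀ ω, ξ j ω = 0) ∧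
        ∃ k ∈ K, ∀ᵐ ω ∂P, g n ω ≤ (∑ j, ξ j ω * Y j ω) + k ω) →
      (∀ᵐ ω ∂P, Tendsto (fun n => g n ω) atTop (nhds (gl ω))) →
      ∃ ξ : Fin J → Ω → ℝ, (∀ j, Measurable[m] (ξ j)) ∧
        ∃ k ∈ K, ∀ᵐ ω ∂P, gl ω ≤ (∑ j, ξ j ω * Y j ω) + k ω by
    intro g gl hg hconv
    have hg' : ∀ n, ∃ ξ : Fin J → Ω → ℝ, (∀ j, Measurable[m] (ξ j)) ∧
        (∀ j, j ∉ (Finset.univ : Finset (Fin J)) → ∀ ω, ξ j ω = 0) ∧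
        ∃ k ∈ K, ∀ᵐ ω ∂P, g n ω ≤ (∑ j, ξ j ω * Y j ω) + k ω := by
      intro n
      obtain ⟨f, ⟨ξ, hξm, k, hkK, rfl⟩, hle⟩ := hg n
      exact ⟨ξ, hξm, fun j hj => absurd (Finset.mem_univ j) hj, k, hkK, hle⟩
    obtain ⟨ξ, hξm, k, hkK, hle⟩ :=
      H (Finset.univ : Finset (Fin J)).card Finset.univ le_rfl g gl hg' hconv
    exact ⟨_, ⟨ξ, hξm, k, hkK, rfl⟩, hle⟩
  intro N
  induction N with
  | zero =>
    intro s hs g gl hg hconv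
    have hse : s = ∅ := Finset.card_eq_zero.1 (Nat.le_zero.1 hs)
    subst hse
    choose ξ hξm hξ0 k hkK hgle using hg
    have hg' : ∀ n, ∃ k' ∈ K, ∀ᵐ ω ∂P, g n ω ≤ k' ω := by
      intro n
      refine ⟨k n, hkK n, (hgle n).mono fun ω h => ?_⟩
      have e : (∑ j, ξ n j ω * Y j ω) = 0 :=
        Finset.sum_eq_zero fun j _ => by
          rw [hξ0 n j (Finset.notMem_empty j) ω, zero_mul]
      rw [e, zero_add] at h
      exact h
    obtain ⟨k', hk', hle⟩ := hcl g gl hg' hconv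
    refine ⟨fun _ _ => 0, fun j => measurable_const, k', hk', hle.mono fun ω h => ?_⟩
    simpa using h
  | succ N ih =>
    intro s hcard g gl hg hconv
    by_cases hsN : s.card ≤ N
    · exact ih s hsN g gl hg hconv
    choose ξ hξm hξ0 k hkK hgle using hg
    set b : ℕ → Ω → ℝ := fun n ω => ∑ j, |ξ n j ω| with hbdef
    have hbm : ∀ n, Measurable[m] (b n) :=
      fun n => Finset.measurable_sum _ fun j _ => (hξm n j).abs
    set A : Set Ω := {ω | ∃ q : ℕ, ∀ M, ∃ n, M ≤ n ∧ b n ω ≤ (q:ℝ)} with hAdef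
    have hA : MeasurableSet[m] A := by
      have e : A = ⋃ q : ℕ, ⋂ M, ⋃ n, ({ω | M ≤ n} ∩ {ω | b n ω ≤ (q:ℝ)}) := by
        ext ω
        simp only [hAdef, Set.mem_setOf_eq, Set.mem_iUnion, Set.mem_iInter, Set.mem_inter_iff]
      rw [e]
      exact MeasurableSet.iUnion fun q => MeasurableSet.iInter fun M =>
        MeasurableSet.iUnion fun n =>
          (MeasurableSet.const _).inter (measurableSet_le (hbm n) measurable_const)
    obtain ⟨ξA, hξAm, kA, hkAK, hleA⟩ := caseA P m Y K hK hcl g gl ξ k hξm hkK hgle hconv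
      A hA (fun ω hω => hω)
    set B : Set Ω := Aᶜ with hBdef
    have hBtend : ∀ ω ∈ B, Tendsto (fun n => b n ω) atTop atTop := by
      intro ω hω
      rw [tendsto_atTop]
      intro C
      have hω' : ¬ ∃ q : ℕ, ∀ M, ∃ n, M ≤ n ∧ b n ω ≤ (q:ℝ) := hω
      push_neg at hω'
      obtain ⟨M, hM⟩ := hω' ⌈C⌉₊
      refine eventually_atTop.2 ⟨M, fun n hn => ?_⟩
      have h2 := hM n hn
      calc C ≤ ((⌈C⌉₊ : ℕ) : ℝ) := Nat.le_ceil C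
      _ ≤ b n ω := le_of_lt h2
    set indB : Ω → ℝ := B.indicator (fun _ => (1:ℝ)) with hindB
    have hindBm : Measurable[m] indB := measurable_const.indicator hA.compl
    set φ : ℕ → Ω → ℝ := fun n ω => indB ω / max (b n ω) 1 with hφ
    have hφm : ∀ n, Measurable[m] (φ n) :=
      fun n => hindBm.div ((hbm n).max measurable_const)
    have hmaxpos : ∀ n ω, (0:ℝ) < max (b n ω) 1 :=
      fun n ω => lt_of_lt_of_le zero_lt_one (le_max_right _ _)
    have hφnonneg : ∀ n ω, 0 ≤ φ n ω := fun n ω =>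
      div_nonneg (Set.indicator_nonneg (fun _ _ => zero_le_one) ω) (le_of_lt (hmaxpos n ω))
    set η : Fin J → ℕ → Ω → ℝ := fun j n ω => φ n ω * ξ n j ω with hη
    have hηm : ∀ j n, Measurable[m] (η j n) := fun j n => (hφm n).mul (hξm n j)
    have hξleb : ∀ n (j : Fin J) ω, |ξ n j ω| ≤ b n ω := fun n j ω =>
      Finset.single_le_sum (f := fun j' => |ξ n j' ω|) (fun j' _ => abs_nonneg _)
        (Finset.mem_univ j)
    have hηbd : ∀ (j : Fin J) n ω, |η j n ω| ≤ 1 := by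
      intro j n ω
      by_cases hω : ω ∈ B
      · simp only [hη, hφ, hindB, Set.indicator_of_mem hω]
        rw [abs_mul, abs_div, abs_one, abs_of_pos (hmaxpos n ω)]
        rw [div_mul_eq_mul_div, div_le_one (hmaxpos n ω), one_mul]
        exact le_trans (hξleb n j ω) (le_max_left _ _)
      · simp [hη, hφ, hindB, Set.indicator_of_notMem hω]
    obtain ⟨ρ, c, hρm, hcm, hρlt, hcconv⟩ := exists_sel_tendsto_vec (m := m) J
      (fun j n ω => if h : j < J then η ⟨j, h⟩ n ω else 0)
      (fun j n => by
        by_cases h : j < J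
        · simp only [dif_pos h]; exact hηm ⟨j, h⟩ n
        · simp only [dif_neg h]; exact measurable_const)
      (fun _ => (1:ℝ))
      (fun j n ω => by
        by_cases h : j < J
        · simp only [dif_pos h]; exact hηbd ⟨j, h⟩ n ω
        · simp only [dif_neg h, abs_zero]; exact zero_le_one)
    have hρsm : ∀ ω, StrictMono (fun i => ρ i ω) :=
      fun ω => strictMono_nat_of_lt_succ (fun i => hρlt ω i)
    have hρtend : ∀ ω, Tendsto (fun i => ρ i ω) atTop atTop :=
      fun ω => tendsto_atTop_mono (fun i => (hρsm ω).le_apply) tendsto_id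
    set cB : Fin J → Ω → ℝ := fun j => c j.val with hcBdef
    have hcBm : ∀ j : Fin J, Measurable[m] (cB j) := fun j => hcm j.val
    have hηconv : ∀ (j : Fin J) ω,
        Tendsto (fun k' => η j (ρ k' ω) ω) atTop (nhds (cB j ω)) := by
      intro j ω
      have h := hcconv j.val j.isLt ω
      simp only [dif_pos j.isLt, Fin.eta] at h
      exact h
    have hcB0 : ∀ (j : Fin J) ω, ω ∉ B → cB j ω = 0 := by
      intro j ω hω
      have h0 : Tendsto (fun k' => η j (ρ k' ω) ω) atTop (nhds 0) := by
        have e : ∀ k', η j (ρ k' ω) ω = 0 := fun k' => by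
          simp [hη, hφ, hindB, Set.indicator_of_notMem hω]
        exact tendsto_const_nhds.congr fun k' => (e k').symm
      exact tendsto_nhds_unique (hηconv j ω) h0
    have hcBs : ∀ j : Fin J, j ∉ s → ∀ ω, cB j ω = 0 := by
      intro j hj ω
      have h0 : Tendsto (fun k' => η j (ρ k' ω) ω) atTop (nhds 0) := by
        have e : ∀ k', η j (ρ k' ω) ω = 0 := fun k' => by
          simp [hη, hξ0 _ j hj ω]
        exact tendsto_const_nhds.congr fun k' => (e k').symm
      exact tendsto_nhds_unique (hηconv j ω) h0
    -- the limiting one-step gain is nonnegative, hence null by no-arbitrage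
    have key := hcl (fun k' ω => φ (ρ k' ω) ω * g (ρ k' ω) ω - ∑ j, η j (ρ k' ω) ω * Y j ω)
      (fun ω => - ∑ j, cB j ω * Y j ω) ?hypB ?convB
    case hypB =>
      intro k'
      refine ⟨fun ω => φ (ρ k' ω) ω * k (ρ k' ω) ω,
        hK.paste (fun n ω => φ n ω * k n ω)
          (fun n => hK.smul (φ n) (hφm n) (k n) (hkK n)) (ρ k') (hρm k'), ?_⟩
      have hgleAll : ∀ᵐ ω ∂P, ∀ n, g n ω ≤ (∑ j, ξ n j ω * Y j ω) + k n ω := ae_all_iff.2 hgle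
      refine hgleAll.mono fun ω hω => ?_
      show φ (ρ k' ω) ω * g (ρ k' ω) ω - (∑ j, η j (ρ k' ω) ω * Y j ω)
        ≤ φ (ρ k' ω) ω * k (ρ k' ω) ω
      have h := hω (ρ k' ω)
      have hmul := mul_le_mul_of_nonneg_left h (hφnonneg (ρ k' ω) ω)
      have eS : φ (ρ k' ω) ω * ((∑ j, ξ (ρ k' ω) j ω * Y j ω) + k (ρ k' ω) ω)
          = (∑ j, η j (ρ k' ω) ω * Y j ω) + φ (ρ k' ω) ω * k (ρ k' ω) ω := by
        rw [mul_add, Finset.mul_sum]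
        congr 1
        exact Finset.sum_congr rfl fun j _ => (mul_assoc _ _ _).symm
      rw [eS] at hmul
      linarith
    case convB =>
      refine hconv.mono fun ω hω => ?_
      have h2 : Tendsto (fun k' => ∑ j, η j (ρ k' ω) ω * Y j ω) atTop
          (nhds (∑ j, cB j ω * Y j ω)) :=
        tendsto_finset_sum _ (fun j _ => (hηconv j ω).mul_const (Y j ω))
      have h1 : Tendsto (fun k' => φ (ρ k' ω) ω * g (ρ k' ω) ω) atTop (nhds 0) := by
        by_cases hωB : ω ∈ B
        · have hgm : Tendsto (fun k' => g (ρ k' ω) ω) atTop (nhds (gl ω)) :=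
            hω.comp (hρtend ω)
          have hbigm : Tendsto (fun k' => max (b (ρ k' ω) ω) 1) atTop atTop :=
            tendsto_atTop_mono (fun k' => le_max_left _ _) ((hBtend ω hωB).comp (hρtend ω))
          have := hgm.div_atTop hbigm
          refine this.congr fun k' => ?_
          simp only [hφ, hindB, Set.indicator_of_mem hωB]
          rw [one_div_mul_eq_div]
        · have e : ∀ k', φ (ρ k' ω) ω * g (ρ k' ω) ω = 0 := fun k' => by
            simp [hφ, hindB, Set.indicator_of_notMem hωB]
          exact tendsto_const_nhds.congr fun k' => (e k').symm
      simpa using h1.sub h2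
    obtain ⟨r, hrK, hler⟩ := key
    have hzero : ∀ᵐ ω ∂P, (∑ j, cB j ω * Y j ω) + r ω = 0 := by
      refine hna cB (fun j => hcBm j) r hrK (hler.mono fun ω h => by linarith)
    -- coverage of B by the sets where some coordinate of the limit is large
    set ε0 : ℝ := 1 / (2 * (J:ℝ)) with hε0
    have hcover : ∀ ω ∈ B, ∃ j : Fin J, ε0 ≤ |cB j ω| := by
      intro ω hωB
      by_contra hall
      push_neg at hall
      have hev : ∀ᶠ k' in atTop, ∀ j : Fin J, |η j (ρ k' ω) ω| < ε0 := by
        rw [eventually_all]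
        intro j
        exact ((hηconv j ω).abs).eventually_lt_const (hall j)
      have hev2 : ∀ᶠ k' in atTop, (1:ℝ) ≤ b (ρ k' ω) ω :=
        (tendsto_atTop.1 ((hBtend ω hωB).comp (hρtend ω))) 1
      obtain ⟨k', h1, h2⟩ := (hev.and hev2).exists
      have hsum : (∑ j, |η j (ρ k' ω) ω|) = 1 := by
        have hb1 : b (ρ k' ω) ω ≠ 0 := by linarith
        have hmax : max (b (ρ k' ω) ω) 1 = b (ρ k' ω) ω := max_eq_left h2
        have e1 : ∀ j : Fin J, |η j (ρ k' ω) ω| = φ (ρ k' ω) ω * |ξ (ρ k' ω) j ω| := by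
          intro j
          rw [hη]
          rw [abs_mul, abs_of_nonneg (hφnonneg _ ω)]
        rw [Finset.sum_congr rfl fun j _ => e1 j, ← Finset.mul_sum]
        show φ (ρ k' ω) ω * b (ρ k' ω) ω = 1
        rw [hφ]
        simp only [hindB, Set.indicator_of_mem hωB, hmax]
        rw [one_div, inv_mul_cancel₀ hb1]
      have hsum2 : (∑ j, |η j (ρ k' ω) ω|) ≤ (J:ℝ) * ε0 := by
        calc (∑ j, |η j (ρ k' ω) ω|) ≤ ∑ _j : Fin J, ε0 :=
            Finset.sum_le_sum fun j _ => le_of_lt (h1 j)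
        _ = (J:ℝ) * ε0 := by rw [Finset.sum_const, Finset.card_univ, Fintype.card_fin,
            nsmul_eq_mul]
      rw [hsum] at hsum2
      rcases Nat.eq_zero_or_pos J with hJ | hJ
      · rw [hε0, hJ] at hsum2; norm_num at hsum2
      · have hJR : (0:ℝ) < (J:ℝ) := by exact_mod_cast hJ
        rw [hε0, mul_one_div] at hsum2
        have e2 : (J:ℝ) / (2 * (J:ℝ)) = 1/2 := by
          field_simp
        rw [e2] at hsum2
        linarith
    -- definition of the partition pieces
    set Cset : Fin J → Set Ω := fun j =>
      {ω | ω ∈ B ∧ ε0 ≤ |cB j ω| ∧ ∀ j' : Fin J, j' < j → |cB j' ω| < ε0} with hCset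
    have hCmeas : ∀ j, MeasurableSet[m] (Cset j) := by
      intro j
      have e : Cset j = (B ∩ {ω | ε0 ≤ |cB j ω|}) ∩
          ⋂ (j' : Fin J), {ω | j' < j → |cB j' ω| < ε0} := by
        ext ω
        simp only [hCset, Set.mem_setOf_eq, Set.mem_inter_iff, Set.mem_iInter]
        tauto
      rw [e]
      refine ((hA.compl.inter
        (measurableSet_le measurable_const (hcBm j).abs)).inter
        (MeasurableSet.iInter fun j' => ?_))
      by_cases hj' : j' < j
      · have e2 : {ω | j' < j → |cB j' ω| < ε0} = {ω | |cB j' ω| < ε0} := by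
          ext ω; simp [hj']
        rw [e2]
        exact measurableSet_lt (hcBm j').abs measurable_const
      · have e2 : {ω | j' < j → |cB j' ω| < ε0} = Set.univ := by
          ext ω; simp [hj']
        rw [e2]
        exact MeasurableSet.univ
    have hCsub : ∀ j, Cset j ⊆ B := fun j ω hω => hω.1
    -- pointwise partition of unity
    have hpartsum : ∀ ω, A.indicator (fun _ => (1:ℝ)) ω
        + ∑ j, (Cset j).indicator (fun _ => (1:ℝ)) ω = 1 := by
      intro ω
      by_cases hω : ω ∈ A
      · rw [Set.indicator_of_mem hω]
        have hz : ∀ j : Fin J, (Cset j).indicator (fun _ => (1:ℝ)) ω = 0 := by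
          intro j
          apply Set.indicator_of_notMem
          intro hc
          exact (hCsub j hc) hω
        rw [Finset.sum_eq_zero fun j _ => hz j]
        norm_num
      · rw [Set.indicator_of_notMem hω]
        have hωB : ω ∈ B := hω
        set t : Finset (Fin J) := Finset.univ.filter (fun j => ε0 ≤ |cB j ω|) with ht
        have htne : t.Nonempty := by
          obtain ⟨j, hj⟩ := hcover ω hωB
          exact ⟨j, by simp [ht, hj]⟩
        set j0 : Fin J := t.min' htne with hj0
        have hj0t : j0 ∈ t := t.min'_mem htne
        have hj0big : ε0 ≤ |cB j0 ω| := by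
          have := hj0t
          simp only [ht, Finset.mem_filter] at this
          exact this.2
        have hj0mem : ω ∈ Cset j0 := by
          refine ⟨hωB, hj0big, fun j' hj' => ?_⟩
          by_contra hge
          push_neg at hge
          have hj't : j' ∈ t := by simp [ht, hge]
          exact absurd (t.min'_le j' hj't) (not_le.2 hj')
        rw [Finset.sum_eq_single_of_mem j0 (Finset.mem_univ j0)]
        · rw [Set.indicator_of_mem hj0mem]; norm_num
        · intro j _ hjne
          apply Set.indicator_of_notMem
          intro hc
          rcases lt_or_gt_of_ne hjne with hlt | hgt
          · -- j < j0 : then j ∈ t contradicting minimality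
            have : ε0 ≤ |cB j ω| := hc.2.1
            have hjt : j ∈ t := by simp [ht, this]
            exact absurd (t.min'_le j hjt) (not_le.2 hlt)
          · -- j0 < j : then Cset j forces |cB j0 ω| < ε0
            exact absurd (hc.2.2 j0 hgt) (not_lt.2 hj0big)
    -- each piece: either trivial or handled by the induction hypothesis
    have hpiece : ∀ j : Fin J, ∃ ξP : Fin J → Ω → ℝ, (∀ j', Measurable[m] (ξP j')) ∧
        ∃ kP ∈ K, ∀ᵐ ω ∂P,
          (Cset j).indicator (fun _ => (1:ℝ)) ω * gl ω ≤ (∑ j', ξP j' ω * Y j' ω) + kP ω := by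
      intro j
      have hJpos : (0:ℝ) < (J:ℝ) := by exact_mod_cast j.pos
      have hε0pos : 0 < ε0 := by rw [hε0]; positivity
      by_cases hjs : j ∈ s
      swap
      · -- Cset j is empty
        have hempty : ∀ ω, ω ∉ Cset j := by
          intro ω hc
          have := hc.2.1
          rw [hcBs j hjs ω] at this
          simp only [abs_zero] at this
          linarith
        refine ⟨fun _ _ => 0, fun _ => measurable_const, fun _ => 0, hK.zero,
          Filter.Eventually.of_forall fun ω => ?_⟩
        rw [Set.indicator_of_notMem (hempty ω)]
        simp
      · -- the elimination step
        set indC : Ω → ℝ := (Cset j).indicator (fun _ => (1:ℝ)) with hindC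
        have hindCm : Measurable[m] indC := measurable_const.indicator (hCmeas j)
        have hindCnn : ∀ ω, 0 ≤ indC ω :=
          fun ω => Set.indicator_nonneg (fun _ _ => zero_le_one) ω
        set lam : ℕ → Ω → ℝ := fun n ω => indC ω * ξ n j ω / cB j ω with hlam
        have hlamm : ∀ n, Measurable[m] (lam n) :=
          fun n => (hindCm.mul (hξm n j)).div (hcBm j)
        set ξP' : ℕ → Fin J → Ω → ℝ :=
          fun n j' ω => indC ω * ξ n j' ω - lam n ω * cB j' ω with hξP'
        have hξP'm : ∀ n j', Measurable[m] (ξP' n j') :=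
          fun n j' => (hindCm.mul (hξm n j')).sub ((hlamm n).mul (hcBm j'))
        have hξP'0 : ∀ n j', j' ∉ s.erase j → ∀ ω, ξP' n j' ω = 0 := by
          intro n j' hj' ω
          rw [Finset.mem_erase] at hj'
          push_neg at hj'
          by_cases hj's : j' ∈ s
          · -- then j' = j
            have hjj : j' = j := by
              by_contra hne
              exact (hj' hne) hj's
            subst hjj
            by_cases hω : ω ∈ Cset j'
            · have hcne : cB j' ω ≠ 0 := by
                have h := hω.2.1
                intro h0
                rw [h0, abs_zero] at h
                linarith
              simp only [hξP', hlam, hindC, Set.indicator_of_mem hω, one_mul]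
              rw [div_mul_cancel₀ _ hcne]
              ring
            · simp only [hξP', hlam, hindC, Set.indicator_of_notMem hω, zero_mul]
              norm_num
          · simp only [hξP', hlam, hξ0 n j' hj's ω, hcBs j' hj's ω]
            ring
        set kP' : ℕ → Ω → ℝ := fun n ω => indC ω * k n ω + (- lam n ω) * r ω with hkP'
        have hkP'K : ∀ n, kP' n ∈ K := fun n =>
          hK.add _ (hK.smul indC hindCm (k n) (hkK n)) _
            (hK.smul (fun ω => - lam n ω) (hlamm n).neg r hrK)
        have hgP : ∀ n, ∀ᵐ ω ∂P,
            indC ω * g n ω ≤ (∑ j', ξP' n j' ω * Y j' ω) + kP' n ω := by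
          intro n
          refine ((hgle n).and hzero).mono fun ω hh => ?_
          obtain ⟨h1, h2⟩ := hh
          have e : (∑ j', ξP' n j' ω * Y j' ω)
              = indC ω * (∑ j', ξ n j' ω * Y j' ω)
                - lam n ω * (∑ j', cB j' ω * Y j' ω) := by
            rw [Finset.mul_sum, Finset.mul_sum, ← Finset.sum_sub_distrib]
            exact Finset.sum_congr rfl fun j' _ => by rw [hξP']; ring
          have hmul := mul_le_mul_of_nonneg_left h1 (hindCnn ω)
          rw [mul_add] at hmul
          have h3 : lam n ω * (∑ j', cB j' ω * Y j' ω) + lam n ω * r ω = 0 := by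
            rw [← mul_add, h2, mul_zero]
          rw [e, hkP']
          show indC ω * g n ω ≤ indC ω * (∑ j', ξ n j' ω * Y j' ω)
              - lam n ω * (∑ j', cB j' ω * Y j' ω) + (indC ω * k n ω + (- lam n ω) * r ω)
          linarith [hmul, h3]
        have hcard' : (s.erase j).card ≤ N := by
          rw [Finset.card_erase_of_mem hjs]
          omega
        obtain ⟨ξP, hξPm, kP, hkPK, hkPle⟩ := ih (s.erase j) hcard'
          (fun n ω => indC ω * g n ω) (fun ω => indC ω * gl ω)
          (fun n => ⟨ξP' n, fun j' => hξP'm n j', hξP'0 n, kP' n, hkP'K n, hgP n⟩)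
          (hconv.mono fun ω hω => hω.const_mul (indC ω))
        exact ⟨ξP, hξPm, kP, hkPK, hkPle⟩
    -- assemble the pieces
    choose ξP hξPm kP hkPK hkPle using hpiece
    refine ⟨fun j' ω => ξA j' ω + ∑ j, ξP j j' ω, ?_, fun ω => kA ω + ∑ j, kP j ω, ?_, ?_⟩
    · intro j'
      exact (hξAm j').add (Finset.measurable_sum _ fun j _ => hξPm j j')
    · exact hK.add _ hkAK _ (hK.sumMem Finset.univ (fun j => kP j) fun j _ => hkPK j)
    · have hall : ∀ᵐ ω ∂P, ∀ j : Fin J,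
          (Cset j).indicator (fun _ => (1:ℝ)) ω * gl ω
            ≤ (∑ j', ξP j j' ω * Y j' ω) + kP j ω :=
        ae_all_iff.2 hkPle
      refine (hleA.and hall).mono fun ω hh => ?_
      obtain ⟨h1, h2⟩ := hh
      have hdecomp : gl ω = A.indicator (fun _ => (1:ℝ)) ω * gl ω
          + ∑ j, (Cset j).indicator (fun _ => (1:ℝ)) ω * gl ω := by
        rw [← Finset.sum_mul, ← add_mul, hpartsum ω, one_mul]
      have hsple : (∑ j, (Cset j).indicator (fun _ => (1:ℝ)) ω * gl ω)
          ≤ ∑ j, ((∑ j', ξP j j' ω * Y j' ω) + kP j ω) :=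
        Finset.sum_le_sum fun j _ => h2 j
      have e1 : (∑ j', (ξA j' ω + ∑ j, ξP j j' ω) * Y j' ω)
          = (∑ j', ξA j' ω * Y j' ω) + ∑ j, ∑ j', ξP j j' ω * Y j' ω := by
        calc ∑ j', (ξA j' ω + ∑ j, ξP j j' ω) * Y j' ω
            = ∑ j', (ξA j' ω * Y j' ω + ∑ j, ξP j j' ω * Y j' ω) :=
              Finset.sum_congr rfl fun j' _ => by rw [add_mul, Finset.sum_mul]
        _ = (∑ j', ξA j' ω * Y j' ω) + ∑ j', ∑ j, ξP j j' ω * Y j' ω :=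
              Finset.sum_add_distrib
        _ = (∑ j', ξA j' ω * Y j' ω) + ∑ j, ∑ j', ξP j j' ω * Y j' ω := by
              rw [Finset.sum_comm]
      have e : (∑ j', (ξA j' ω + ∑ j, ξP j j' ω) * Y j' ω) + (kA ω + ∑ j, kP j ω)
          = ((∑ j', ξA j' ω * Y j' ω) + kA ω)
            + ∑ j, ((∑ j', ξP j j' ω * Y j' ω) + kP j ω) := by
        rw [e1, Finset.sum_add_distrib]
        ring
      show gl ω ≤ (∑ j', (ξA j' ω + ∑ j, ξP j j' ω) * Y j' ω) + (kA ω + ∑ j, kP j ω)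
      rw [e, hdecomp]
      exact add_le_add h1 hsple

end Step

end CollectiveAux

end AuxSection

namespace Collective

/-- A discrete-time multi-agent financial market: time horizon `T ≥ 1`, `N ≥ 1` agents,
`J` assets with price processes `X`, global filtration `F` with `F T` the ambient σ-algebra,
agent filtrations `Fi i` with `Fi i t ⊆ F t`, and `assets i ⊆ {1,…,J}` the assets agent `i`
may trade; every `X j` with `j ∈ assets i` is `Fi i`-adapted and every `X j t` is `P`-integrable. -/
structure Market (Ω : Type*) [m0 : MeasurableSpace Ω] where
  T : ℕ
  N : ℕ
  J : ℕ
  P : Measure Ω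
  F : ℕ → MeasurableSpace Ω
  Fi : Fin N → ℕ → MeasurableSpace Ω
  X : Fin J → ℕ → Ω → ℝ
  assets : Fin N → Finset (Fin J)
  hT : 1 ≤ T
  hN : 1 ≤ N
  hProb : IsProbabilityMeasure P
  F_mono : Monotone F
  F_le : ∀ t, F t ≤ m0
  F_top : F T = m0
  Fi_mono : ∀ i, Monotone (Fi i)
  Fi_le : ∀ i t, Fi i t ≤ F t
  X_adapted : ∀ j t, t ≤ T → Measurable[F t] (X j t)
  Xi_adapted : ∀ i, ∀ j ∈ assets i, ∀ t, t ≤ T → Measurable[Fi i t] (X j t)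
  X_int : ∀ j t, Integrable (X j t) P

variable {Ω : Type*} [m0 : MeasurableSpace Ω] (M : Market Ω)

/-- `K_{i,s:S}`: gains of zero-cost predictable strategies of agent `i` over period `{s,…,S}`. -/
def KiSt (i : Fin M.N) (s S : ℕ) : Set (Ω → ℝ) :=
  { f | ∃ H : Fin M.J → ℕ → Ω → ℝ,
      (∀ j ∈ M.assets i, ∀ t, Measurable[M.Fi i (t - 1)] (H j t)) ∧
      f = fun ω => ∑ j ∈ M.assets i, ∑ t ∈ Finset.Icc (s + 1) S,
            H j t ω * (M.X j t ω - M.X j (t - 1) ω) }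

/-- `K_i`: terminal gains of zero-cost admissible (predictable) strategies of agent `i`. -/
def Ki (i : Fin M.N) : Set (Ω → ℝ) := KiSt M i 0 M.T

/-- `K_{s:S}` for the global market (all assets, global filtration). -/
def KglobSt (s S : ℕ) : Set (Ω → ℝ) :=
  { f | ∃ H : Fin M.J → ℕ → Ω → ℝ,
      (∀ j t, Measurable[M.F (t - 1)] (H j t)) ∧
      f = fun ω => ∑ j, ∑ t ∈ Finset.Icc (s + 1) S,
            H j t ω * (M.X j t ω - M.X j (t - 1) ω) }

/-- `K`: terminal gains in the global market. -/
def Kglob : Set (Ω → ℝ) := KglobSt M 0 M.T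

/-- No Collective Arbitrage with respect to the exchange set `Ys`:
`(⨉ᵢ Kᵢ + 𝒴) ∩ ⨉ᵢ L⁰₊(F^i_T) = {0}` (in the a.s. sense). -/
def NCA (Ys : Set (Fin M.N → Ω → ℝ)) : Prop :=
  ∀ k : Fin M.N → Ω → ℝ, (∀ i, k i ∈ Ki M i) → ∀ Y ∈ Ys,
    (∀ i, ∀ᵐ ω ∂M.P, 0 ≤ k i ω + Y i ω) →
    ∀ i, (fun ω => k i ω + Y i ω) =ᵐ[M.P] (fun _ => (0 : ℝ))

/-- Classical no-arbitrage for agent `i`: `K_i ∩ L⁰₊(F^i_T) = {0}`. -/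
def NAi (i : Fin M.N) : Prop :=
  ∀ k ∈ Ki M i, (∀ᵐ ω ∂M.P, 0 ≤ k ω) → k =ᵐ[M.P] (fun _ => (0 : ℝ))

/-- Classical global no-arbitrage: `K ∩ L⁰₊(F_T) = {0}`. -/
def NAglob : Prop :=
  ∀ k ∈ Kglob M, (∀ᵐ ω ∂M.P, 0 ≤ k ω) → k =ᵐ[M.P] (fun _ => (0 : ℝ))

/-- `K^𝒴 = ⨉ᵢ (Kᵢ - L⁰₊(F^i_T)) + 𝒴`. -/
def KY (Ys : Set (Fin M.N → Ω → ℝ)) : Set (Fin M.N → Ω → ℝ) :=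
  { f | ∃ k l Y : Fin M.N → Ω → ℝ, (∀ i, k i ∈ Ki M i) ∧
      (∀ i, Measurable[M.Fi i M.T] (l i) ∧ (∀ᵐ ω ∂M.P, 0 ≤ l i ω)) ∧
      Y ∈ Ys ∧ f = fun i ω => k i ω - l i ω + Y i ω }

/-- `⨉ᵢ Kᵢ + 𝒴`. -/
def sumKY (Ys : Set (Fin M.N → Ω → ℝ)) : Set (Fin M.N → Ω → ℝ) :=
  { f | ∃ k Y : Fin M.N → Ω → ℝ, (∀ i, k i ∈ Ki M i) ∧ Y ∈ Ys ∧
      f = fun i ω => k i ω + Y i ω }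

/-- `C^𝒴 = K^𝒴 ∩ ⨉ᵢ L¹(F^i_T,P)`. -/
def CY (Ys : Set (Fin M.N → Ω → ℝ)) : Set (Fin M.N → Ω → ℝ) :=
  { f | f ∈ KY M Ys ∧ ∀ i, Integrable (f i) M.P }

/-- The polar `(C^𝒴)⁰` in `⨉ᵢ L^∞(F^i_T,P)`. -/
def polar (Ys : Set (Fin M.N → Ω → ℝ)) : Set (Fin M.N → Ω → ℝ) :=
  { z | (∀ i, Measurable[M.Fi i M.T] (z i) ∧ ∃ C : ℝ, ∀ᵐ ω ∂M.P, |z i ω| ≤ C) ∧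
      ∀ f ∈ CY M Ys, (∑ i, ∫ ω, z i ω * f i ω ∂M.P) ≤ 0 }

/-- `(C^𝒴)⁰₁`: vectors of probability measures, absolutely continuous with respect
to `P`, whose densities form an element of the polar `(C^𝒴)⁰`. -/
def polarOne (Ys : Set (Fin M.N → Ω → ℝ)) : Set (Fin M.N → Measure Ω) :=
  { Q | ∃ z ∈ polar M Ys, (∀ i, ∀ᵐ ω ∂M.P, 0 ≤ z i ω) ∧
      ∀ i, IsProbabilityMeasure (Q i) ∧
        Q i = M.P.withDensity (fun ω => ENNReal.ofReal (z i ω)) }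

/-- `M_i`: martingale measures for agent `i`'s assets (with respect to the filtration `Fi i`)
with a bounded `F^i_T`-measurable density with respect to `P`. -/
def Mi (i : Fin M.N) : Set (Measure Ω) :=
  { Q | IsProbabilityMeasure Q ∧
      (∃ z : Ω → ℝ, Measurable[M.Fi i M.T] z ∧ (∀ ω, 0 ≤ z ω) ∧ (∃ C : ℝ, ∀ ω, z ω ≤ C) ∧
        Q = M.P.withDensity (fun ω => ENNReal.ofReal (z ω))) ∧
      ∀ j ∈ M.assets i,
        (∀ t, t ≤ M.T → Integrable (M.X j t) Q) ∧
        (∀ t, 1 ≤ t → t ≤ M.T → ∀ s : Set Ω, MeasurableSet[M.Fi i (t - 1)] s →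
          ∫ ω in s, M.X j t ω ∂Q = ∫ ω in s, M.X j (t - 1) ω ∂Q) }

/-- `M^𝒴`: vectors of martingale measures satisfying the polarity condition on `𝒴 ∩ ⨉ᵢ L¹`. -/
def MY (Ys : Set (Fin M.N → Ω → ℝ)) : Set (Fin M.N → Measure Ω) :=
  { Q | (∀ i, Q i ∈ Mi M i) ∧
      ∀ Y ∈ Ys, (∀ i, Integrable (Y i) M.P) →
        (∑ i, ∫ ω, Y i ω ∂(Q i)) ≤ 0 }

/-- Closedness with respect to convergence in `P`-probability (as a subset of `L⁰`). -/
def ClosedInProb (S : Set (Fin M.N → Ω → ℝ)) : Prop :=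
  ∀ (f : ℕ → Fin M.N → Ω → ℝ) (g : Fin M.N → Ω → ℝ),
    (∀ n, f n ∈ S) →
    (∀ i, TendstoInMeasure M.P (fun n => f n i) atTop (g i)) →
    ∃ g' ∈ S, ∀ i, g i =ᵐ[M.P] g' i

/-- `Ys` is a convex cone. -/
def IsConvexCone (Ys : Set (Fin M.N → Ω → ℝ)) : Prop :=
  (∀ Y ∈ Ys, ∀ Z ∈ Ys, Y + Z ∈ Ys) ∧ (∀ Y ∈ Ys, ∀ c : ℝ, 0 ≤ c → c • Y ∈ Ys)

/-- `Ys` is a vector (sub)space. -/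
def IsLinSubspace (Ys : Set (Fin M.N → Ω → ℝ)) : Prop :=
  (fun _ _ => (0 : ℝ)) ∈ Ys ∧ (∀ Y ∈ Ys, ∀ Z ∈ Ys, Y + Z ∈ Ys) ∧
    (∀ Y ∈ Ys, ∀ c : ℝ, c • Y ∈ Ys)

/-- `Ys` contains `ℝ^N₀ = {x ∈ ℝ^N : ∑ᵢ xⁱ = 0}` (as constant random vectors). -/
def ContainsR0 (Ys : Set (Fin M.N → Ω → ℝ)) : Prop :=
  ∀ x : Fin M.N → ℝ, (∑ i, x i) = 0 → (fun i _ => x i) ∈ Ys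

/-- `Q` is (a probability measure) equivalent to `P`. -/
def EquivToP (Q : Measure Ω) : Prop := Q ≪ M.P ∧ M.P ≪ Q

/-- `𝒴` is a set of allowed exchanges: `𝒴 ⊆ ⨉ᵢ L⁰(Ω,F^i_T,P)` and `0 ∈ 𝒴`. -/
def IsExchangeSet (Ys : Set (Fin M.N → Ω → ℝ)) : Prop :=
  (fun _ _ => (0 : ℝ)) ∈ Ys ∧ ∀ Y ∈ Ys, ∀ i, Measurable[M.Fi i M.T] (Y i)

/-- the full zero-sum exchange set `𝒴₀`. -/
def Y0 : Set (Fin M.N → Ω → ℝ) :=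
  { Y | (∀ i, Measurable[M.Fi i M.T] (Y i)) ∧ ∀ᵐ ω ∂M.P, (∑ i, Y i ω) = 0 }

/-- feasibility for the individual super-replication price `ρ_{i,+}`. -/
def rhoiFeas (i : Fin M.N) (f : Ω → ℝ) (m : ℝ) : Prop :=
  ∃ k ∈ Ki M i, ∀ᵐ ω ∂M.P, f ω ≤ m + k ω

/-- individual super-replication price `ρ_{i,+}(f)` (an extended real, `inf ∅ = +∞`). -/
def rhoi (i : Fin M.N) (f : Ω → ℝ) : EReal :=
  sInf { x : EReal | ∃ m : ℝ, rhoiFeas M i f m ∧ x = (m : EReal) }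

/-- feasibility for `ρ^N_+`. -/
def rhoNFeas (g : Fin M.N → Ω → ℝ) (m : Fin M.N → ℝ) : Prop :=
  ∃ k : Fin M.N → Ω → ℝ, (∀ i, k i ∈ Ki M i) ∧
    ∀ i, ∀ᵐ ω ∂M.P, g i ω ≤ m i + k i ω

/-- super-replication price of all `N` claims without exchanges, `ρ^N_+(g)`. -/
def rhoN (g : Fin M.N → Ω → ℝ) : EReal :=
  sInf { x : EReal | ∃ m : Fin M.N → ℝ, rhoNFeas M g m ∧ x = ((∑ i, m i : ℝ) : EReal) }

/-- feasibility for the collective super-replication price `ρ^𝒴_+`. -/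
def rhoYFeas (Ys : Set (Fin M.N → Ω → ℝ)) (g : Fin M.N → Ω → ℝ) (m : Fin M.N → ℝ) : Prop :=
  ∃ k : Fin M.N → Ω → ℝ, (∀ i, k i ∈ Ki M i) ∧ ∃ Y ∈ Ys,
    ∀ i, ∀ᵐ ω ∂M.P, g i ω ≤ m i + k i ω + Y i ω

/-- collective super-replication price of all claims, `ρ^𝒴_+(g)`. -/
def rhoY (Ys : Set (Fin M.N → Ω → ℝ)) (g : Fin M.N → Ω → ℝ) : EReal :=
  sInf { x : EReal | ∃ m : Fin M.N → ℝ, rhoYFeas M Ys g m ∧ x = ((∑ i, m i : ℝ) : EReal) }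

/-- feasibility for `π^𝒴_+`. -/
def piYFeas (Ys : Set (Fin M.N → Ω → ℝ)) (g : Fin M.N → Ω → ℝ) (m : ℝ) : Prop :=
  ∃ k : Fin M.N → Ω → ℝ, (∀ i, k i ∈ Ki M i) ∧ ∃ Y ∈ Ys,
    ∀ i, ∀ᵐ ω ∂M.P, g i ω ≤ m + k i ω + Y i ω

/-- collective super-replication price of any one claim, `π^𝒴_+(g)`. -/
def piY (Ys : Set (Fin M.N → Ω → ℝ)) (g : Fin M.N → Ω → ℝ) : EReal :=
  sInf { x : EReal | ∃ m : ℝ, piYFeas M Ys g m ∧ x = (m : EReal) }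

/-- super-replication price in the full market, `ρ_{full,+}(G)`. -/
def rhoFull (G : Ω → ℝ) : EReal :=
  sInf { x : EReal | ∃ m : ℝ, (∃ k ∈ Kglob M, ∀ᵐ ω ∂M.P, G ω ≤ m + k ω) ∧ x = (m : EReal) }

/-- `𝒴 + ℝ^N₀`. -/
def plusR0 (Ys : Set (Fin M.N → Ω → ℝ)) : Set (Fin M.N → Ω → ℝ) :=
  { Z | ∃ Y ∈ Ys, ∃ x : Fin M.N → ℝ, (∑ i, x i) = 0 ∧ Z = fun i ω => Y i ω + x i }

/-- super-replication of a single claim for agent `i` when a pricing measure `Q` is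
given: besides trading in `K_i`, any `F^i_T`-measurable `Q`-integrable instrument
with zero `Q`-expectation may be used. -/
def rhoQ (Q : Measure Ω) (i : Fin M.N) (f : Ω → ℝ) : EReal :=
  sInf { x : EReal | ∃ m : ℝ,
    (∃ k ∈ Ki M i, ∃ Y : Ω → ℝ, Measurable[M.Fi i M.T] Y ∧ Integrable Y Q ∧
      (∫ ω, Y ω ∂Q) = 0 ∧ ∀ᵐ ω ∂M.P, f ω ≤ m + k ω + Y ω) ∧ x = (m : EReal) }

/-- an optimizer of `ρ^𝒴_+(g)`. -/
def IsOptimizer (Ys : Set (Fin M.N → Ω → ℝ)) (g : Fin M.N → Ω → ℝ)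
    (m : Fin M.N → ℝ) (k : Fin M.N → Ω → ℝ) (Y : Fin M.N → Ω → ℝ) : Prop :=
  (∀ i, k i ∈ Ki M i) ∧ Y ∈ Ys ∧
    (∀ i, ∀ᵐ ω ∂M.P, g i ω ≤ m i + k i ω + Y i ω) ∧
    ((∑ i, m i : ℝ) : EReal) = rhoY M Ys g

/-- `NCA_{s:S}(𝒴)`: no collective arbitrage over the period `{s,…,S}`. -/
def NCAst (Ys : Set (Fin M.N → Ω → ℝ)) (s S : ℕ) : Prop :=
  ∀ k : Fin M.N → Ω → ℝ, (∀ i, k i ∈ KiSt M i s S) → ∀ Y ∈ Ys,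
    (∀ i, ∀ᵐ ω ∂M.P, 0 ≤ k i ω + Y i ω) →
    ∀ i, (fun ω => k i ω + Y i ω) =ᵐ[M.P] (fun _ => (0 : ℝ))

/-- `NA_{i,s:S}`: classical no-arbitrage for agent `i` over the period `{s,…,S}`. -/
def NAist (i : Fin M.N) (s S : ℕ) : Prop :=
  ∀ k ∈ KiSt M i s S, (∀ᵐ ω ∂M.P, 0 ≤ k ω) → k =ᵐ[M.P] (fun _ => (0 : ℝ))

/-- `NA_{s:S}`: global no-arbitrage over the period `{s,…,S}`. -/
def NAst (s S : ℕ) : Prop :=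
  ∀ k ∈ KglobSt M s S, (∀ᵐ ω ∂M.P, 0 ≤ k ω) → k =ᵐ[M.P] (fun _ => (0 : ℝ))

/-- `K^𝒴_{s:S} = ⨉ᵢ K_{i,s:S} − (L⁰₊(F_T))^N + 𝒴`. -/
def KYst (Ys : Set (Fin M.N → Ω → ℝ)) (s S : ℕ) : Set (Fin M.N → Ω → ℝ) :=
  { f | ∃ k l Y : Fin M.N → Ω → ℝ, (∀ i, k i ∈ KiSt M i s S) ∧
      (∀ i, Measurable (l i) ∧ (∀ᵐ ω ∂M.P, 0 ≤ l i ω)) ∧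
      Y ∈ Ys ∧ f = fun i ω => k i ω - l i ω + Y i ω }

/-- `⨉ᵢ K_{i,s:S} + 𝒴`. -/
def sumKYst (Ys : Set (Fin M.N → Ω → ℝ)) (s S : ℕ) : Set (Fin M.N → Ω → ℝ) :=
  { f | ∃ k Y : Fin M.N → Ω → ℝ, (∀ i, k i ∈ KiSt M i s S) ∧ Y ∈ Ys ∧
      f = fun i ω => k i ω + Y i ω }

/-- `𝒴 − ⨉ᵢ L⁰₊(F^i_T)`. -/
def YminusL0 (Ys : Set (Fin M.N → Ω → ℝ)) : Set (Fin M.N → Ω → ℝ) :=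
  { f | ∃ Y ∈ Ys, ∃ l : Fin M.N → Ω → ℝ,
      (∀ i, Measurable[M.Fi i M.T] (l i) ∧ (∀ᵐ ω ∂M.P, 0 ≤ l i ω)) ∧
      f = fun i ω => Y i ω - l i ω }



open CollectiveAux

lemma kglobSt_goodK (s S t0 : ℕ) (ht0 : t0 ≤ s) :
    GoodK (M.F t0) (KglobSt M s S) := by
  have hm' : M.F t0 ≤ M.F s := M.F_mono ht0
  classical
  constructor
  · refine ⟨fun _ _ _ => 0, fun j t => measurable_const, ?_⟩
    funext ω
    simp
  · rintro k₁ ⟨H₁, hH₁, rfl⟩ k₂ ⟨H₂, hH₂, rfl⟩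
    refine ⟨fun j t ω => H₁ j t ω + H₂ j t ω, fun j t => (hH₁ j t).add (hH₂ j t), ?_⟩
    funext ω
    rw [← Finset.sum_add_distrib]
    refine Finset.sum_congr rfl fun j _ => ?_
    rw [← Finset.sum_add_distrib]
    exact Finset.sum_congr rfl fun t _ => by ring
  · rintro φ hφ kk ⟨H, hH, rfl⟩
    refine ⟨fun j t ω => if s + 1 ≤ t then φ ω * H j t ω else 0, fun j t => ?_, ?_⟩
    · by_cases ht : s + 1 ≤ t
      · simp only [if_pos ht]
        have hφ' : Measurable[M.F (t-1)] φ :=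
          hφ.mono (le_trans hm' (M.F_mono (by omega))) le_rfl
        exact hφ'.mul (hH j t)
      · simp only [if_neg ht]
        exact measurable_const
    · funext ω
      rw [Finset.mul_sum]
      refine Finset.sum_congr rfl fun j _ => ?_
      rw [Finset.mul_sum]
      refine Finset.sum_congr rfl fun t htmem => ?_
      rw [Finset.mem_Icc] at htmem
      simp only [if_pos htmem.1]
      ring
  · intro kk hkk ν hν
    simp only [KglobSt, Set.mem_setOf_eq] at hkk
    choose H hHm hHeq using hkk
    refine ⟨fun j t ω => if s + 1 ≤ t then H (ν ω) j t ω else 0, fun j t => ?_, ?_⟩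
    · by_cases ht : s + 1 ≤ t
      · simp only [if_pos ht]
        have hν' : Measurable[M.F (t-1)] ν :=
          hν.mono (le_trans hm' (M.F_mono (by omega))) le_rfl
        exact measurable_paste (fun n ω => H n j t ω) (fun n => hHm n j t) ν hν'
      · simp only [if_neg ht]
        exact measurable_const
    · funext ω
      have e := congrFun (hHeq (ν ω)) ω
      rw [e]
      refine Finset.sum_congr rfl fun j _ => Finset.sum_congr rfl fun t htmem => ?_
      rw [Finset.mem_Icc] at htmem
      simp only [if_pos htmem.1]

lemma kglobSt_base (S : ℕ) : ClosedKP M.P (KglobSt M S S) := by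
  intro g gl hg hconv
  have hzero : ∀ k ∈ KglobSt M S S, ∀ ω, k ω = 0 := by
    rintro kk ⟨H, _, rfl⟩ ω
    have he : Finset.Icc (S+1) S = ∅ := Finset.Icc_eq_empty (by omega)
    simp [he]
  refine ⟨fun _ => 0, (kglobSt_goodK M S S S le_rfl).zero, ?_⟩
  have hg' : ∀ n, ∀ᵐ ω ∂M.P, g n ω ≤ 0 := by
    intro n
    obtain ⟨k, hkK, hle⟩ := hg n
    exact hle.mono fun ω h => by rw [hzero k hkK ω] at h; exact h
  have hall : ∀ᵐ ω ∂M.P, ∀ n, g n ω ≤ 0 := ae_all_iff.2 hg'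
  refine (hall.and hconv).mono fun ω hh => ?_
  obtain ⟨h1, h2⟩ := hh
  exact le_of_tendsto' h2 h1

lemma kglob_split (t S : ℕ) (h : t + 1 ≤ S) :
    KglobSt M t S = {f | ∃ ξ : Fin M.J → Ω → ℝ, (∀ j, Measurable[M.F t] (ξ j)) ∧
      ∃ k ∈ KglobSt M (t+1) S,
        f = fun ω => (∑ j, ξ j ω * (M.X j (t+1) ω - M.X j t ω)) + k ω} := by
  classical
  have hicc : Finset.Icc (t+1) S = insert (t+1) (Finset.Icc (t+2) S) := by
    ext x
    simp only [Finset.mem_Icc, Finset.mem_insert]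
    omega
  have hnotmem : t + 1 ∉ Finset.Icc (t+2) S := by
    simp [Finset.mem_Icc]
  ext f
  constructor
  · rintro ⟨H, hH, rfl⟩
    refine ⟨fun j => H j (t+1), fun j => by simpa using hH j (t+1), ?_⟩
    refine ⟨fun ω => ∑ j, ∑ u ∈ Finset.Icc (t+1+1) S, H j u ω * (M.X j u ω - M.X j (u-1) ω),
      ⟨H, hH, rfl⟩, ?_⟩
    funext ω
    rw [← Finset.sum_add_distrib]
    refine Finset.sum_congr rfl fun j _ => ?_
    rw [hicc, Finset.sum_insert hnotmem]
    have e2 : Finset.Icc (t+2) S = Finset.Icc (t+1+1) S := by norm_num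
    rw [e2]
    simp only [Nat.add_sub_cancel]
  · rintro ⟨ξ, hξ, k, ⟨H, hH, rfl⟩, rfl⟩
    refine ⟨fun j u => if u = t+1 then ξ j else H j u, fun j u => ?_, ?_⟩
    · by_cases hu : u = t+1
      · subst hu
        simp only [if_pos rfl]
        simpa using hξ j
      · simp only [if_neg hu]
        exact hH j u
    · funext ω
      rw [← Finset.sum_add_distrib]
      refine Finset.sum_congr rfl fun j _ => ?_
      rw [hicc, Finset.sum_insert hnotmem]
      have e2 : Finset.Icc (t+2) S = Finset.Icc (t+1+1) S := by norm_num
      rw [e2]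
      have e4 : ∑ u ∈ Finset.Icc (t+1+1) S,
          (fun j u => if u = t+1 then ξ j else H j u) j u ω * (M.X j u ω - M.X j (u-1) ω)
          = ∑ u ∈ Finset.Icc (t+1+1) S, H j u ω * (M.X j u ω - M.X j (u-1) ω) := by
        refine Finset.sum_congr rfl fun u humem => ?_
        rw [Finset.mem_Icc] at humem
        have hne : u ≠ t+1 := by omega
        simp only [if_neg hne]
      rw [e4]
      simp [Nat.add_sub_cancel]

lemma kglobSt_subset (t : ℕ) : KglobSt M t M.T ⊆ Kglob M := by
  classical
  rintro f ⟨H, hH, rfl⟩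
  refine ⟨fun j u ω => if t + 1 ≤ u then H j u ω else 0, fun j u => ?_, ?_⟩
  · by_cases hu : t + 1 ≤ u
    · simp only [if_pos hu]; exact hH j u
    · simp only [if_neg hu]; exact measurable_const
  · funext ω
    refine Finset.sum_congr rfl fun j _ => ?_
    have hsub : Finset.Icc (t+1) M.T ⊆ Finset.Icc (0+1) M.T :=
      Finset.Icc_subset_Icc (by omega) le_rfl
    calc ∑ u ∈ Finset.Icc (t+1) M.T, H j u ω * (M.X j u ω - M.X j (u-1) ω)
        = ∑ u ∈ Finset.Icc (t+1) M.T,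
            (if t+1 ≤ u then H j u ω else 0) * (M.X j u ω - M.X j (u-1) ω) := by
          refine Finset.sum_congr rfl fun u humem => ?_
          rw [Finset.mem_Icc] at humem
          rw [if_pos humem.1]
    _ = ∑ u ∈ Finset.Icc (0+1) M.T,
            (if t+1 ≤ u then H j u ω else 0) * (M.X j u ω - M.X j (u-1) ω) := by
          refine Finset.sum_subset hsub fun u hu1 hu2 => ?_
          rw [Finset.mem_Icc] at hu1
          have hnot : ¬ (t+1 ≤ u) := fun hc => hu2 (Finset.mem_Icc.2 ⟨hc, hu1.2⟩)
          rw [if_neg hnot, zero_mul]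

lemma kglobSt_closed (hna : NAglob M) :
    ∀ (d t : ℕ), t + d = M.T → ClosedKP M.P (KglobSt M t M.T) := by
  intro d
  induction d with
  | zero =>
    intro t ht
    have he : t = M.T := by omega
    subst he
    exact kglobSt_base M M.T
  | succ d ihd =>
    intro t ht
    have hcl : ClosedKP M.P (KglobSt M (t+1) M.T) := ihd (t+1) (by omega)
    have hgood : GoodK (M.F t) (KglobSt M (t+1) M.T) :=
      kglobSt_goodK M (t+1) M.T t (by omega)
    have hna' : ∀ ξ : Fin M.J → Ω → ℝ, (∀ j, Measurable[M.F t] (ξ j)) →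
        ∀ k ∈ KglobSt M (t+1) M.T,
        (∀ᵐ ω ∂M.P, 0 ≤ (∑ j, ξ j ω * (M.X j (t+1) ω - M.X j t ω)) + k ω) →
        (∀ᵐ ω ∂M.P, (∑ j, ξ j ω * (M.X j (t+1) ω - M.X j t ω)) + k ω = 0) := by
      intro ξ hξ k hkK hpos
      have hmem : (fun ω => (∑ j, ξ j ω * (M.X j (t+1) ω - M.X j t ω)) + k ω)
          ∈ KglobSt M t M.T := by
        rw [kglob_split M t M.T (by omega)]
        exact ⟨ξ, hξ, k, hkK, rfl⟩
      have hmem' := kglobSt_subset M t hmem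
      have hz := hna _ hmem' hpos
      filter_upwards [hz] with ω hω
      exact hω
    have hstep := step_closed M.P (M.F t)
      (fun j ω => M.X j (t+1) ω - M.X j t ω) (KglobSt M (t+1) M.T) hgood hcl hna'
    rw [kglob_split M t M.T (by omega)]
    exact hstep

/-- under global `NA` (no triviality of `F_0` assumed), if
`k_n + Z_n ≥ W_n` a.s. with `k_n ∈ K`, `Z_n` `F_0`-measurable and `W_n → W_∞` a.s.,
then `inf_n Z_n > -∞` a.s. -/
theorem inf_Z_bddBelow (hna : NAglob M)
    (k : ℕ → Ω → ℝ) (hk : ∀ n, k n ∈ Kglob M)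
    (Z : ℕ → Ω → ℝ) (hZ : ∀ n, Measurable[M.F 0] (Z n))
    (W : ℕ → Ω → ℝ) (hW : ∀ n, Measurable (W n))
    (Winf : Ω → ℝ) (hWinf : Measurable Winf)
    (hineq : ∀ n, ∀ᵐ ω ∂M.P, W n ω ≤ k n ω + Z n ω)
    (hconv : ∀ᵐ ω ∂M.P, Tendsto (fun n => W n ω) atTop (nhds (Winf ω))) :
    ∀ᵐ ω ∂M.P, BddBelow (Set.range fun n => Z n ω) := by
  classical
  have hclosed : ClosedKP M.P (Kglob M) := kglobSt_closed M hna M.T 0 (by omega)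
  have hgood : GoodK (M.F 0) (Kglob M) := kglobSt_goodK M 0 M.T 0 le_rfl
  set Bset : Set Ω := {ω | ¬ BddBelow (Set.range fun n => Z n ω)} with hBset
  have hBiff : ∀ ω, ω ∈ Bset ↔ ∀ q : ℕ, ∃ n, Z n ω < -(q:ℝ) := by
    intro ω
    constructor
    · intro hω q
      by_contra hno
      push_neg at hno
      exact hω ⟨-(q:ℝ), fun x hx => by obtain ⟨n, rfl⟩ := hx; exact hno n⟩
    · intro hq hbdd
      obtain ⟨bb, hb⟩ := hbdd
      obtain ⟨q, hqb⟩ := exists_nat_gt (-bb)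
      obtain ⟨n, hn⟩ := hq q
      have hle : bb ≤ Z n ω := hb (Set.mem_range_self n)
      linarith
  have hBmeas : MeasurableSet[M.F 0] Bset := by
    have e : Bset = ⋂ q : ℕ, ⋃ n : ℕ, {ω | Z n ω < -(q:ℝ)} := by
      ext ω
      rw [Set.mem_iInter]
      constructor
      · intro hω q
        rw [Set.mem_iUnion]
        exact (hBiff ω).1 hω q
      · intro hω
        refine (hBiff ω).2 fun q => ?_
        have := hω q
        rw [Set.mem_iUnion] at this
        exact this
    rw [e]
    exact MeasurableSet.iInter fun q => MeasurableSet.iUnion fun n =>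
      measurableSet_lt (hZ n) measurable_const
  set indBB : Ω → ℝ := Bset.indicator (fun _ => (1:ℝ)) with hindBB
  have hindm : Measurable[M.F 0] indBB := measurable_const.indicator hBmeas
  set σ : ℕ → Ω → ℕ := fun q ω => if h : ∃ n, Z n ω < -(q:ℝ) then Nat.find h else 0 with hσ
  have hσm : ∀ q, Measurable[M.F 0] (σ q) := by
    intro q
    rw [hσ]
    exact measurable_dfind (fun n ω => Z n ω < -(q:ℝ))
      (fun n => measurableSet_lt (hZ n) measurable_const) _
      (@measurable_const ℕ Ω _ (M.F 0) 0)
  have hσspec : ∀ q ω, ω ∈ Bset → Z (σ q ω) ω < -(q:ℝ) := by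
    intro q ω hω
    have h : ∃ n, Z n ω < -(q:ℝ) := (hBiff ω).1 hω q
    have e : σ q ω = Nat.find h := by rw [hσ]; exact dif_pos h
    rw [e]
    exact Nat.find_spec h
  set lam : ℕ → Ω → ℝ := fun q ω => indBB ω / (1 + max (-(Z (σ q ω) ω)) 0) with hlam
  have hZσm : ∀ q, Measurable[M.F 0] (fun ω => Z (σ q ω) ω) := fun q =>
    measurable_paste Z hZ (σ q) (hσm q)
  have hlamm : ∀ q, Measurable[M.F 0] (lam q) := fun q =>
    hindm.div (measurable_const.add ((hZσm q).neg.max measurable_const))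
  have hden_pos : ∀ q ω, (0:ℝ) < 1 + max (-(Z (σ q ω) ω)) 0 := by
    intro q ω
    have : (0:ℝ) ≤ max (-(Z (σ q ω) ω)) 0 := le_max_right _ _
    linarith
  have hlam_nonneg : ∀ q ω, 0 ≤ lam q ω := fun q ω =>
    div_nonneg (Set.indicator_nonneg (fun _ _ => zero_le_one) ω) (le_of_lt (hden_pos q ω))
  have happ := hclosed (fun q ω => lam q ω * (W (σ q ω) ω - Z (σ q ω) ω)) indBB ?hyp ?conv
  case hyp =>
    intro q
    refine ⟨fun ω => lam q ω * k (σ q ω) ω,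
      hgood.smul (lam q) (hlamm q) _ (hgood.paste k hk (σ q) (hσm q)), ?_⟩
    have hineqAll : ∀ᵐ ω ∂M.P, ∀ n, W n ω ≤ k n ω + Z n ω := ae_all_iff.2 hineq
    refine hineqAll.mono fun ω hω => ?_
    have h := hω (σ q ω)
    exact mul_le_mul_of_nonneg_left
      (by linarith : W (σ q ω) ω - Z (σ q ω) ω ≤ k (σ q ω) ω) (hlam_nonneg q ω)
  case conv =>
    refine hconv.mono fun ω hω => ?_
    obtain ⟨u, hu⟩ := hω.bddAbove_range
    obtain ⟨l, hl⟩ := hω.bddBelow_range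
    set Cw : ℝ := max u (-l) with hCw
    have hWbd : ∀ n, |W n ω| ≤ Cw := by
      intro n
      rw [abs_le]
      constructor
      · have := hl (Set.mem_range_self n)
        have h2 : -Cw ≤ l := by
          rw [hCw]
          have := le_max_right u (-l)
          linarith
        linarith
      · exact le_trans (hu (Set.mem_range_self n)) (le_max_left _ _)
    by_cases hωB : ω ∈ Bset
    · have e1 : indBB ω = 1 := by rw [hindBB]; exact Set.indicator_of_mem hωB _
      rw [e1]
      have hkey : ∀ q : ℕ, |lam q ω * (W (σ q ω) ω - Z (σ q ω) ω) - 1|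
          ≤ (Cw + 1) / (1 + (q:ℝ)) := by
        intro q
        have hZq := hσspec q ω hωB
        have hqnn : (0:ℝ) ≤ (q:ℝ) := Nat.cast_nonneg q
        have hZneg : Z (σ q ω) ω < 0 := by linarith
        have hmaxeq : max (-(Z (σ q ω) ω)) 0 = -(Z (σ q ω) ω) := max_eq_left (by linarith)
        have hD : (1:ℝ) + (q:ℝ) ≤ 1 + max (-(Z (σ q ω) ω)) 0 := by
          rw [hmaxeq]; linarith
        have hDpos : (0:ℝ) < 1 + (q:ℝ) := by linarith
        have hDpos2 := hden_pos q ω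
        have e2 : lam q ω * (W (σ q ω) ω - Z (σ q ω) ω) - 1
            = (W (σ q ω) ω - 1) / (1 + max (-(Z (σ q ω) ω)) 0) := by
          have hD' : (0:ℝ) < 1 + -Z (σ q ω) ω := by linarith
          rw [hlam, hindBB]
          simp only [Set.indicator_of_mem hωB]
          rw [hmaxeq]
          rw [eq_div_iff (ne_of_gt hD'), sub_mul, one_mul]
          have e5 : 1 / (1 + -Z (σ q ω) ω) * (W (σ q ω) ω - Z (σ q ω) ω) * (1 + -Z (σ q ω) ω)
              = W (σ q ω) ω - Z (σ q ω) ω := by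
            rw [mul_comm (1 / (1 + -Z (σ q ω) ω)) _, mul_assoc,
              div_mul_cancel₀ (1:ℝ) (ne_of_gt hD'), mul_one]
          rw [e5]
          ring
        rw [e2, abs_div, abs_of_pos hDpos2]
        apply div_le_div₀ (by linarith [hWbd (σ q ω), abs_nonneg (W (σ q ω) ω)] : (0:ℝ) ≤ Cw + 1)
        · have := hWbd (σ q ω)
          rw [abs_le] at this
          rw [abs_le]
          constructor <;> linarith
        · exact hDpos
        · exact hD
      have hlim : Tendsto (fun q : ℕ => (Cw + 1) / (1 + (q:ℝ))) atTop (nhds 0) := by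
        apply Tendsto.div_atTop tendsto_const_nhds
        have : Tendsto (fun q : ℕ => (q:ℝ)) atTop atTop := tendsto_natCast_atTop_atTop
        exact tendsto_atTop_add_const_left atTop 1 this
      have hz : Tendsto (fun q => lam q ω * (W (σ q ω) ω - Z (σ q ω) ω) - 1) atTop (nhds 0) :=
        squeeze_zero_norm hkey hlim
      have := hz.add_const 1
      simpa using this
    · have e1 : indBB ω = 0 := by rw [hindBB]; exact Set.indicator_of_notMem hωB _
      rw [e1]
      have e2 : ∀ q, lam q ω * (W (σ q ω) ω - Z (σ q ω) ω) = 0 := by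
        intro q
        rw [hlam, hindBB]
        simp only [Set.indicator_of_notMem hωB]
        rw [zero_div, zero_mul]
      exact tendsto_const_nhds.congr fun q => (e2 q).symm
  obtain ⟨kstar, hkstarK, hkstarle⟩ := happ
  have hkpos : ∀ᵐ ω ∂M.P, 0 ≤ kstar ω := hkstarle.mono fun ω h =>
    le_trans (Set.indicator_nonneg (fun _ _ => zero_le_one) ω) h
  have hkzero := hna kstar hkstarK hkpos
  have hfinal : ∀ᵐ ω ∂M.P, indBB ω ≤ 0 := by
    filter_upwards [hkstarle, hkzero] with ω h1 h2
    rw [h2] at h1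
    exact h1
  refine hfinal.mono fun ω h => ?_
  by_contra hb
  have hmem : ω ∈ Bset := hb
  have : indBB ω = 1 := by rw [hindBB]; exact Set.indicator_of_mem hmem _
  rw [this] at h
  linarith

end Collective
end
end

section
/- Suppose all agents share the same filtration, F^i = F^j = F for every i, j, and let 𝒴_0 := { Y ∈ (L^0(Ω,F_T,P))^N : ∑_{i=1}^N Y^i = 0 P-a.s. }. Then: (1) NCA(𝒴_0) is equivalent to the global no-arbitrage condition NA, i.e. K ∩ L^0_+(Ω,F_T,P) = {0}; (2) under either of these equivalent conditions, K^{𝒴_0} := ⨉_{i=1}^N (K_i − L^0_+(Ω,F_T,P)) + 𝒴_0 is closed with respect to convergence in P-probability. -/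
open MeasureTheory Filter
open scoped ENNReal

noncomputable section

namespace Collective

variable {Ω : Type*} [m0 : MeasurableSpace Ω] (M : Market Ω)

section AuxRS
open scoped Topology


variable {Ω : Type*} {𝓖 : MeasurableSpace Ω}

/-- compose a measurable random index with a sequence of measurable functions. -/
lemma measurable_comp_index {β : Type*} [MeasurableSpace β] {g : ℕ → Ω → β}
    (hg : ∀ n, Measurable[𝓖] (g n)) {τ : Ω → ℕ} (hτ : Measurable[𝓖] τ) :
    Measurable[𝓖] (fun ω => g (τ ω) ω) := by
  have h1 : Measurable[𝓖.prod ⊤] (fun p : Ω × ℕ => g p.2 p.1) :=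
    measurable_from_prod_countable_left (fun n => hg n)
  exact h1.comp (measurable_id.prodMk hτ)

/-- measurable selection of a random subsequence satisfying countably many
frequently-satisfied predicates. -/
lemma exists_random_subseq (p : ℕ → ℕ → Ω → Prop)
    (hm : ∀ k n, MeasurableSet[𝓖] {ω | p k n ω})
    (hf : ∀ k ω, ∃ᶠ n in atTop, p k n ω) :
    ∃ σ : ℕ → Ω → ℕ, (∀ k, Measurable[𝓖] (σ k)) ∧ (∀ ω, StrictMono fun k => σ k ω) ∧
      ∀ k ω, p k (σ k ω) ω := by
  classical
  have hex0 : ∀ ω, ∃ n, p 0 n ω := fun ω => ((hf 0 ω).exists)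
  have hτ0 : Measurable[𝓖] (fun ω => Nat.find (hex0 ω)) :=
    measurable_find hex0 (fun k => hm 0 k)
  have step : ∀ (k : ℕ) (τ : {f : Ω → ℕ // Measurable[𝓖] f}),
      ∃ τ' : {f : Ω → ℕ // Measurable[𝓖] f}, ∀ ω, τ.1 ω < τ'.1 ω ∧ p k (τ'.1 ω) ω := by
    intro k τ
    have hex : ∀ ω, ∃ n, τ.1 ω < n ∧ p k n ω := by
      intro ω
      obtain ⟨b, hb1, hb2⟩ := (frequently_atTop'.mp (hf k ω)) (τ.1 ω)
      exact ⟨b, hb1, hb2⟩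
    refine ⟨⟨fun ω => Nat.find (hex ω), ?_⟩, fun ω => Nat.find_spec (hex ω)⟩
    refine measurable_find hex (fun n => ?_)
    have : {ω | τ.1 ω < n ∧ p k n ω} = (τ.1 ⁻¹' (Set.Iio n)) ∩ {ω | p k n ω} := by
      ext ω; simp [Set.mem_Iio]
    rw [this]
    exact (τ.2 measurableSet_Iio).inter (hm k n)
  choose next hnext using step
  let σs : ℕ → {f : Ω → ℕ // Measurable[𝓖] f} :=
    fun k => Nat.rec ⟨fun ω => Nat.find (hex0 ω), hτ0⟩ (fun k ih => next (k+1) ih) k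
  have hσs : ∀ k, σs (k+1) = next (k+1) (σs k) := fun k => rfl
  refine ⟨fun k => (σs k).1, fun k => (σs k).2, ?_, ?_⟩
  · intro ω
    apply strictMono_nat_of_lt_succ
    intro k
    exact (hnext (k+1) (σs k) ω).1
  · intro k ω
    cases k with
    | zero => exact Nat.find_spec (hex0 ω)
    | succ k => exact (hnext (k+1) (σs k) ω).2

lemma measurableSet_frequently_le {s : ℕ → Ω → ℝ} (hs : ∀ n, Measurable[𝓖] (s n)) (c : ℝ) :
    MeasurableSet[𝓖] {ω | ∃ᶠ n in atTop, s n ω ≤ c} := by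
  have : {ω | ∃ᶠ n in atTop, s n ω ≤ c} = ⋂ a, ⋃ b, ⋃ _ : a ≤ b, {ω | s b ω ≤ c} := by
    ext ω; simp [Filter.frequently_atTop]
  rw [this]
  exact MeasurableSet.iInter fun a => MeasurableSet.iUnion fun b => MeasurableSet.iUnion
    fun _ => (hs b) measurableSet_Iic


/-- Measurable random-subsequence convergence extraction for a sequence of random vectors
whose norm has finite liminf everywhere. -/
lemma exists_random_subseq_tendsto {J : ℕ} (H : ℕ → Fin J → Ω → ℝ)
    (hH : ∀ n j, Measurable[𝓖] (H n j))
    (hbd : ∀ ω, ∃ c : ℝ, ∃ᶠ n in atTop, (∑ j, |H n j ω|) ≤ c) :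
    ∃ (σ : ℕ → Ω → ℕ) (G : Fin J → Ω → ℝ),
      (∀ k, Measurable[𝓖] (σ k)) ∧ (∀ ω, StrictMono fun k => σ k ω) ∧
      (∀ j, Measurable[𝓖] (G j)) ∧
      (∀ j ω, Tendsto (fun k => H (σ k ω) j ω) atTop (𝓝 (G j ω))) := by
  classical
  set s : ℕ → Ω → ℝ := fun n ω => ∑ j, |H n j ω| with hs_def
  have hsm : ∀ n, Measurable[𝓖] (s n) := fun n =>
    Finset.measurable_sum _ (fun j _ => (hH n j).abs)
  have hexc : ∀ ω, ∃ c : ℕ, ∃ᶠ n in atTop, s n ω ≤ c := by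
    intro ω
    obtain ⟨c, hc⟩ := hbd ω
    exact ⟨⌈c⌉₊, hc.mono fun n hn => hn.trans (Nat.le_ceil c)⟩
  set N : Ω → ℝ := fun ω => ((Nat.find (hexc ω) : ℕ) : ℝ) with hN_def
  have hNm : Measurable[𝓖] N := by
    apply Measurable.comp (measurable_from_top (f := fun n : ℕ => (n : ℝ)))
    exact measurable_find hexc (fun c => measurableSet_frequently_le hsm _)
  have hNfreq : ∀ ω, ∃ᶠ n in atTop, s n ω ≤ N ω := fun ω => Nat.find_spec (hexc ω)
  -- stage 1 : select indices along which `s` is bounded by `N`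
  obtain ⟨τ, hτm, hτsm, hτp⟩ := exists_random_subseq (𝓖 := 𝓖) (fun _ n ω => s n ω ≤ N ω)
    (fun _ n => by
      have : {ω | s n ω ≤ N ω} = {ω | s n ω - N ω ≤ 0} := by ext ω; simp [sub_nonpos]
      rw [this]; exact ((hsm n).sub hNm) measurableSet_Iic)
    (fun _ ω => hNfreq ω)
  -- iterate over coordinates
  have main : ∀ m : ℕ, ∃ σ : ℕ → Ω → ℕ,
      (∀ k, Measurable[𝓖] (σ k)) ∧ (∀ ω, StrictMono fun k => σ k ω) ∧
      (∀ k ω, s (σ k ω) ω ≤ N ω) ∧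
      (∀ j : Fin J, (j : ℕ) < m → ∃ G : Ω → ℝ, Measurable[𝓖] G ∧
        ∀ ω, Tendsto (fun k => H (σ k ω) j ω) atTop (𝓝 (G ω))) := by
    intro m
    induction m with
    | zero => exact ⟨τ, hτm, hτsm, fun k ω => hτp k ω, fun j hj => absurd hj (by omega)⟩
    | succ m ih =>
      obtain ⟨σ, hσm, hσsm, hσbd, hσcv⟩ := ih
      by_cases hmJ : m < J
      · set j₀ : Fin J := ⟨m, hmJ⟩ with hj₀
        set v : ℕ → Ω → ℝ := fun k ω => H (σ k ω) j₀ ω with hv_def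
        have hvm : ∀ k, Measurable[𝓖] (v k) :=
          fun k => measurable_comp_index (fun n => hH n j₀) (hσm k)
        have hvbd : ∀ k ω, |v k ω| ≤ N ω := by
          intro k ω
          refine le_trans ?_ (hσbd k ω)
          exact Finset.single_le_sum (f := fun j => |H (σ k ω) j ω|)
            (fun j _ => abs_nonneg _) (Finset.mem_univ j₀)
        set L : Ω → ℝ := fun ω => liminf (fun k => v k ω) atTop with hL_def
        have hLm : Measurable[𝓖] L := Measurable.liminf hvm
        have hbdd : ∀ ω, IsBoundedUnder (· ≥ ·) atTop (fun k => v k ω) := by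
          intro ω
          exact isBoundedUnder_of ⟨-N ω, fun k => neg_le_of_abs_le (hvbd k ω)⟩
        have hcobdd : ∀ ω, IsCoboundedUnder (· ≥ ·) atTop (fun k => v k ω) := by
          intro ω
          refine IsBoundedUnder.isCoboundedUnder_ge (isBoundedUnder_of ⟨N ω, fun k => ?_⟩)
          exact le_of_abs_le (hvbd k ω)
        have hfreq : ∀ (k : ℕ) ω, ∃ᶠ n in atTop, |v n ω - L ω| ≤ 1/(k+1) := by
          intro k ω
          have hpos : (0:ℝ) < 1/(k+1) := by positivity
          have h1 : ∀ᶠ n in atTop, L ω - 1/(k+1) < v n ω :=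
            eventually_lt_of_lt_liminf (by linarith) (hbdd ω)
          have h2 : ∃ᶠ n in atTop, v n ω < L ω + 1/(k+1) :=
            frequently_lt_of_liminf_lt (hcobdd ω) (by linarith)
          refine (h2.and_eventually h1).mono ?_
          rintro n ⟨hn1, hn2⟩
          rw [abs_le]; constructor <;> linarith
        obtain ⟨ρ, hρm, hρsm, hρp⟩ := exists_random_subseq (𝓖 := 𝓖)
          (fun k n ω => |v n ω - L ω| ≤ 1/(k+1))
          (fun k n => by
            have : {ω | |v n ω - L ω| ≤ 1/(k+1)} =
                {ω | |v n ω - L ω| - 1/(k+1) ≤ 0} := by ext ω; simp [sub_nonpos]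
            rw [this]
            exact ((((hvm n).sub hLm).abs).sub measurable_const) measurableSet_Iic)
          hfreq
        refine ⟨fun k ω => σ (ρ k ω) ω, ?_, ?_, ?_, ?_⟩
        · intro k
          exact measurable_comp_index (fun n => hσm n) (hρm k)
        · intro ω
          exact (hσsm ω).comp (hρsm ω)
        · intro k ω; exact hσbd _ ω
        · intro j hj
          by_cases hjm : (j : ℕ) < m
          · obtain ⟨G, hGm, hGt⟩ := hσcv j hjm
            exact ⟨G, hGm, fun ω => (hGt ω).comp ((hρsm ω).tendsto_atTop)⟩
          · have hjj : j = j₀ := by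
              apply Fin.ext; simp only [hj₀]; omega
            subst hjj
            refine ⟨L, hLm, fun ω => ?_⟩
            have h0 : Tendsto (fun k : ℕ => (1:ℝ)/(k+1)) atTop (𝓝 0) :=
              tendsto_one_div_add_atTop_nhds_zero_nat
            have hsq : Tendsto (fun k => v (ρ k ω) ω - L ω) atTop (𝓝 0) := by
              refine squeeze_zero_norm (fun k => ?_) h0
              simpa [Real.norm_eq_abs] using hρp k ω
            have := hsq.add_const (L ω)
            simpa using this
      · refine ⟨σ, hσm, hσsm, hσbd, fun j hj => hσcv j ?_⟩
        have := j.2; omega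
  obtain ⟨σ, hσm, hσsm, _, hσcv⟩ := main J
  choose G hGm hGt using fun j : Fin J => hσcv j j.2
  exact ⟨σ, G, hσm, hσsm, hGm, fun j ω => hGt j ω⟩


lemma measurable_finset_sum' {ι : Type*} (u : Finset ι) {f : ι → Ω → ℝ}
    (hf : ∀ i ∈ u, Measurable[𝓖] (f i)) :
    Measurable[𝓖] (fun ω => ∑ i ∈ u, f i ω) :=
  Finset.measurable_sum u hf

lemma measurable_sum_abs' {J : ℕ} {H : Fin J → Ω → ℝ} (h : ∀ j, Measurable[𝓖] (H j)) :
    Measurable[𝓖] (fun ω => ∑ j, |H j ω|) :=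
  measurable_finset_sum' _ (fun j _ => (h j).abs)

lemma measurable_indicator' {s : Set Ω} (hs : MeasurableSet[𝓖] s) {f : Ω → ℝ}
    (hf : Measurable[𝓖] f) : Measurable[𝓖] (s.indicator f) :=
  hf.indicator hs

lemma measurable_const' (c : ℝ) : Measurable[𝓖] (fun _ : Ω => c) := measurable_const

end AuxRS
section KLemmas

open scoped Topology

variable {Ω : Type*} [m0 : MeasurableSpace Ω] (M : Market Ω)

lemma KglobSt_zero (s S : ℕ) : (fun _ => (0:ℝ)) ∈ KglobSt M s S := by
  refine ⟨fun _ _ _ => 0, fun j t => measurable_const, ?_⟩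
  funext ω; simp

lemma KglobSt_add {s S : ℕ} {f g : Ω → ℝ} (hf : f ∈ KglobSt M s S) (hg : g ∈ KglobSt M s S) :
    (fun ω => f ω + g ω) ∈ KglobSt M s S := by
  obtain ⟨H1, hm1, he1⟩ := hf
  obtain ⟨H2, hm2, he2⟩ := hg
  refine ⟨fun j t ω => H1 j t ω + H2 j t ω, fun j t => (hm1 j t).add (hm2 j t), ?_⟩
  funext ω
  simp only [he1, he2, add_mul, Finset.sum_add_distrib]

lemma KglobSt_sum {s S : ℕ} {ι : Type*} (u : Finset ι) {g : ι → Ω → ℝ}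
    (hg : ∀ i ∈ u, g i ∈ KglobSt M s S) :
    (fun ω => ∑ i ∈ u, g i ω) ∈ KglobSt M s S := by
  classical
  induction u using Finset.cons_induction with
  | empty => simpa using KglobSt_zero M s S
  | cons a u ha ih =>
    have h1 := hg a (Finset.mem_cons_self a u)
    have h2 := ih (fun i hi => hg i (Finset.mem_cons_of_mem hi))
    have hrw : (fun ω => ∑ i ∈ Finset.cons a u ha, g i ω) =
        fun ω => g a ω + ∑ i ∈ u, g i ω := funext fun ω => Finset.sum_cons ha
    rw [hrw]
    exact KglobSt_add M h1 h2

lemma KglobSt_smul {s S : ℕ} {f : Ω → ℝ} {r : ℕ} (hr : r ≤ s) {c : Ω → ℝ}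
    (hc : Measurable[M.F r] c) (hf : f ∈ KglobSt M s S) :
    (fun ω => c ω * f ω) ∈ KglobSt M s S := by
  classical
  obtain ⟨H, hm, he⟩ := hf
  refine ⟨fun j t => if s + 1 ≤ t then fun ω => c ω * H j t ω else fun _ => 0,
    fun j t => ?_, ?_⟩
  · by_cases ht : s + 1 ≤ t
    · simp only [ht, if_true]
      exact ((hc.mono (M.F_mono (by omega)) le_rfl)).mul (hm j t)
    · simp only [ht, if_false]; exact measurable_const
  · funext ω
    simp only [he, Finset.mul_sum]
    refine Finset.sum_congr rfl (fun j _ => Finset.sum_congr rfl (fun t ht => ?_))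
    rw [Finset.mem_Icc] at ht
    simp only [ht.1, if_true]
    ring

lemma KglobSt_mono {s' s S : ℕ} (h : s' ≤ s) {f : Ω → ℝ} (hf : f ∈ KglobSt M s S) :
    f ∈ KglobSt M s' S := by
  classical
  obtain ⟨H, hm, he⟩ := hf
  refine ⟨fun j t => if s + 1 ≤ t then H j t else fun _ => 0, fun j t => ?_, ?_⟩
  · by_cases ht : s + 1 ≤ t
    · simpa [ht] using hm j t
    · simp [ht]
  · rw [he]
    funext ω
    refine Finset.sum_congr rfl (fun j _ => ?_)
    calc ∑ t ∈ Finset.Icc (s+1) S, H j t ω * (M.X j t ω - M.X j (t-1) ω)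
        = ∑ t ∈ Finset.Icc (s+1) S,
            (if s + 1 ≤ t then H j t else fun _ => (0:ℝ)) ω * (M.X j t ω - M.X j (t-1) ω) := by
          refine Finset.sum_congr rfl (fun t ht => ?_)
          rw [Finset.mem_Icc] at ht
          simp [ht.1]
      _ = ∑ t ∈ Finset.Icc (s'+1) S,
            (if s + 1 ≤ t then H j t else fun _ => (0:ℝ)) ω * (M.X j t ω - M.X j (t-1) ω) := by
          refine Finset.sum_subset (Finset.Icc_subset_Icc (by omega) le_rfl) ?_
          intro t ht hts
          rw [Finset.mem_Icc] at ht
          have hns : ¬ (s + 1 ≤ t) := by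
            rw [Finset.mem_Icc] at hts; omega
          simp [hns]

lemma KglobSt_eq_zero {s : ℕ} (hs : M.T ≤ s) {f : Ω → ℝ} (hf : f ∈ KglobSt M s M.T) :
    f = fun _ => (0:ℝ) := by
  obtain ⟨H, hm, he⟩ := hf
  rw [he]
  funext ω
  rw [Finset.Icc_eq_empty (by omega)]
  simp

lemma KglobSt_oneStep {s : ℕ} (hs : s < M.T) (G : Fin M.J → Ω → ℝ)
    (hG : ∀ j, Measurable[M.F s] (G j)) :
    (fun ω => ∑ j, G j ω * (M.X j (s+1) ω - M.X j s ω)) ∈ KglobSt M s M.T := by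
  classical
  refine ⟨fun j t => if t = s + 1 then G j else fun _ => 0, fun j t => ?_, ?_⟩
  · by_cases ht : t = s + 1
    · subst ht; simpa using hG j
    · simp [ht]
  · funext ω
    refine Finset.sum_congr rfl (fun j _ => ?_)
    rw [Finset.sum_eq_single (s+1)]
    · simp
    · intro t ht hts
      simp [hts]
    · intro hmem
      exfalso
      exact hmem (by rw [Finset.mem_Icc]; omega)

lemma KglobSt_measurable {s : ℕ} {f : Ω → ℝ} (hf : f ∈ KglobSt M s M.T) :
    Measurable f := by
  obtain ⟨H, hm, he⟩ := hf
  rw [he]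
  refine Finset.measurable_sum _ (fun j _ => Finset.measurable_sum _ (fun t ht => ?_))
  rw [Finset.mem_Icc] at ht
  refine ((hm j t).mono (M.F_le (t-1)) le_rfl).mul ?_
  exact ((M.X_adapted j t ht.2).mono (M.F_le t) le_rfl).sub
    ((M.X_adapted j (t-1) (by omega)).mono (M.F_le (t-1)) le_rfl)

lemma KglobSt_decomp {s : ℕ} (hs : s < M.T) {f : Ω → ℝ} (hf : f ∈ KglobSt M s M.T) :
    ∃ (G : Fin M.J → Ω → ℝ) (g : Ω → ℝ), (∀ j, Measurable[M.F s] (G j)) ∧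
      g ∈ KglobSt M (s+1) M.T ∧
      f = fun ω => (∑ j, G j ω * (M.X j (s+1) ω - M.X j s ω)) + g ω := by
  classical
  obtain ⟨H, hm, he⟩ := hf
  refine ⟨fun j => H j (s+1), fun ω => ∑ j, ∑ t ∈ Finset.Icc (s+2) M.T,
      H j t ω * (M.X j t ω - M.X j (t-1) ω), fun j => by simpa using hm j (s+1),
      ⟨H, hm, rfl⟩, ?_⟩
  rw [he]
  funext ω
  rw [← Finset.sum_add_distrib]
  refine Finset.sum_congr rfl (fun j _ => ?_)
  have hins : Finset.Icc (s+1) M.T = insert (s+1) (Finset.Icc (s+2) M.T) := by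
    ext x; simp only [Finset.mem_Icc, Finset.mem_insert]; omega
  rw [hins, Finset.sum_insert (by rw [Finset.mem_Icc]; omega)]
  simp

lemma KglobSt_randIndex {s : ℕ} {ζ : ℕ → Ω → ℝ} (hζ : ∀ n, ζ n ∈ KglobSt M (s+1) M.T)
    {τ : Ω → ℕ} (hτ : Measurable[M.F s] τ) :
    (fun ω => ζ (τ ω) ω) ∈ KglobSt M (s+1) M.T := by
  classical
  choose Hs hHsm hHse using hζ
  refine ⟨fun j t => if s + 2 ≤ t then (fun ω => Hs (τ ω) j t ω) else fun _ => 0,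
    fun j t => ?_, ?_⟩
  · by_cases ht : s + 2 ≤ t
    · simp only [ht, if_true]
      exact measurable_comp_index (fun n => hHsm n j t)
        (hτ.mono (M.F_mono (by omega)) le_rfl)
    · simp [ht]
  · funext ω
    rw [hHse (τ ω)]
    refine Finset.sum_congr rfl (fun j _ => Finset.sum_congr rfl (fun t ht => ?_))
    rw [Finset.mem_Icc] at ht
    simp [show s + 2 ≤ t by omega]

end KLemmas
section PartOne

open scoped Topology

variable {Ω : Type*} [m0 : MeasurableSpace Ω] (M : Market Ω)

lemma ite_sum_pull {c : Prop} [Decidable c] {ι : Type*} (u : Finset ι) (x : ι → ℝ) :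
    (if c then ∑ t ∈ u, x t else 0) = ∑ t ∈ u, (if c then x t else 0) := by
  split <;> simp

lemma Ki_measurable {i : Fin M.N} {f : Ω → ℝ} (hf : f ∈ Ki M i) : Measurable f := by
  obtain ⟨H, hm, he⟩ := hf
  rw [he]
  refine Finset.measurable_sum _ (fun j hj => Finset.measurable_sum _ (fun t ht => ?_))
  rw [Finset.mem_Icc] at ht
  refine ((hm j hj t).mono ((M.Fi_le i (t-1)).trans (M.F_le (t-1))) le_rfl).mul ?_
  exact ((M.X_adapted j t ht.2).mono (M.F_le t) le_rfl).sub
    ((M.X_adapted j (t-1) (by omega)).mono (M.F_le (t-1)) le_rfl)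

lemma sum_Ki_mem_Kglob {k : Fin M.N → Ω → ℝ} (hk : ∀ i, k i ∈ Ki M i) :
    (fun ω => ∑ i, k i ω) ∈ Kglob M := by
  classical
  choose H hm he using hk
  refine ⟨fun j t ω => ∑ i, if j ∈ M.assets i then H i j t ω else 0, fun j t => ?_, ?_⟩
  · refine Finset.measurable_sum _ (fun i _ => ?_)
    by_cases hmem : j ∈ M.assets i
    · simpa [hmem] using (hm i j hmem t).mono (M.Fi_le i (t-1)) le_rfl
    · simp [hmem]
  · funext ω
    calc ∑ i, k i ω
        = ∑ i, ∑ j ∈ M.assets i, ∑ t ∈ Finset.Icc 1 M.T,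
            H i j t ω * (M.X j t ω - M.X j (t-1) ω) :=
          Finset.sum_congr rfl (fun i _ => by rw [he i])
      _ = ∑ i, ∑ j : Fin M.J, ∑ t ∈ Finset.Icc 1 M.T,
            (if j ∈ M.assets i then H i j t ω else 0) * (M.X j t ω - M.X j (t-1) ω) := by
          refine Finset.sum_congr rfl (fun i _ => ?_)
          have h1 : ∀ f : Fin M.J → ℝ,
              ∑ j ∈ M.assets i, f j = ∑ j : Fin M.J, if j ∈ M.assets i then f j else 0 :=
            fun f => by rw [Finset.sum_ite_mem, Finset.univ_inter]
          rw [h1]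
          refine Finset.sum_congr rfl (fun j _ => ?_)
          rw [ite_sum_pull]
          refine Finset.sum_congr rfl (fun t _ => ?_)
          rw [ite_mul, zero_mul]
      _ = ∑ j : Fin M.J, ∑ t ∈ Finset.Icc 1 M.T,
            (∑ i, if j ∈ M.assets i then H i j t ω else 0) *
              (M.X j t ω - M.X j (t-1) ω) := by
          rw [Finset.sum_comm]
          refine Finset.sum_congr rfl (fun j _ => ?_)
          rw [Finset.sum_comm]
          refine Finset.sum_congr rfl (fun t _ => ?_)
          rw [Finset.sum_mul]

lemma Kglob_decomp_Ki (hcommon : ∀ i, M.Fi i = M.F) (hcover : ∀ j, ∃ i, j ∈ M.assets i)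
    {κ : Ω → ℝ} (hκ : κ ∈ Kglob M) :
    ∃ k : Fin M.N → Ω → ℝ, (∀ i, k i ∈ Ki M i) ∧ ∀ ω, κ ω = ∑ i, k i ω := by
  classical
  obtain ⟨H, hm, he⟩ := hκ
  set φ : Fin M.J → Fin M.N := fun j => (hcover j).choose with hφ
  have hφ_spec : ∀ j, j ∈ M.assets (φ j) := fun j => (hcover j).choose_spec
  refine ⟨fun i ω => ∑ j ∈ M.assets i, ∑ t ∈ Finset.Icc 1 M.T,
      (if φ j = i then H j t ω else 0) * (M.X j t ω - M.X j (t-1) ω), fun i => ?_, ?_⟩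
  · refine ⟨fun j t ω => if φ j = i then H j t ω else 0, fun j hj t => ?_, rfl⟩
    rw [hcommon i]
    by_cases hc : φ j = i
    · simpa [hc] using hm j t
    · simp [hc]
  · intro ω
    rw [he]
    calc ∑ j : Fin M.J, ∑ t ∈ Finset.Icc 1 M.T, H j t ω * (M.X j t ω - M.X j (t-1) ω)
        = ∑ j : Fin M.J, ∑ i, (if φ j = i then
            ∑ t ∈ Finset.Icc 1 M.T, H j t ω * (M.X j t ω - M.X j (t-1) ω) else 0) := by
          refine Finset.sum_congr rfl (fun j _ => ?_)
          rw [Finset.sum_ite_eq Finset.univ (φ j)]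
          simp
      _ = ∑ i, ∑ j : Fin M.J, (if j ∈ M.assets i then
            ∑ t ∈ Finset.Icc 1 M.T,
              (if φ j = i then H j t ω else 0) * (M.X j t ω - M.X j (t-1) ω) else 0) := by
          rw [Finset.sum_comm]
          refine Finset.sum_congr rfl (fun i _ => Finset.sum_congr rfl (fun j _ => ?_))
          by_cases hc : φ j = i
          · subst hc
            simp [hφ_spec j]
          · simp [hc]
      _ = ∑ i, ∑ j ∈ M.assets i, ∑ t ∈ Finset.Icc 1 M.T,
            (if φ j = i then H j t ω else 0) * (M.X j t ω - M.X j (t-1) ω) := by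
          refine Finset.sum_congr rfl (fun i _ => ?_)
          have h1 : ∀ f : Fin M.J → ℝ,
              ∑ j ∈ M.assets i, f j = ∑ j : Fin M.J, if j ∈ M.assets i then f j else 0 :=
            fun f => by rw [Finset.sum_ite_mem, Finset.univ_inter]
          rw [h1]

lemma nca_iff_naglob (hcommon : ∀ i, M.Fi i = M.F) (hcover : ∀ j, ∃ i, j ∈ M.assets i) :
    NCA M (Y0 M) ↔ NAglob M := by
  have hNpos : (0:ℝ) < (M.N : ℝ) := by
    have := M.hN; exact_mod_cast Nat.lt_of_lt_of_le Nat.zero_lt_one this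
  constructor
  · intro hNCA κ hκ hpos
    obtain ⟨k, hki, hke⟩ := Kglob_decomp_Ki M hcommon hcover hκ
    set Y : Fin M.N → Ω → ℝ := fun i ω => (M.N : ℝ)⁻¹ * κ ω - k i ω with hY
    have hκm : Measurable κ := KglobSt_measurable M hκ
    have hY0 : Y ∈ Y0 M := by
      constructor
      · intro i
        rw [hcommon i, M.F_top]
        exact (measurable_const.mul hκm).sub (Ki_measurable M (hki i))
      · refine Eventually.of_forall (fun ω => ?_)
        simp only [hY, Finset.sum_sub_distrib, Finset.sum_const, Finset.card_univ,
          Fintype.card_fin, nsmul_eq_mul]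
        rw [← hke ω]
        field_simp
        ring
    have hkey := hNCA k hki Y hY0 ?_ ⟨0, M.hN⟩
    · have : ∀ᵐ ω ∂M.P, (M.N:ℝ)⁻¹ * κ ω = 0 := by
        refine hkey.mono (fun ω hω => ?_)
        simpa [hY] using hω
      refine this.mono (fun ω hω => ?_)
      have : κ ω = 0 := by
        field_simp at hω
        simpa using hω
      simpa using this
    · intro i
      refine hpos.mono (fun ω hω => ?_)
      have : k i ω + Y i ω = (M.N:ℝ)⁻¹ * κ ω := by simp only [hY]; ring
      rw [this]
      positivity
  · intro hNA k hk Y hY hpos i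
    have hsum : (fun ω => ∑ i', k i' ω) ∈ Kglob M := sum_Ki_mem_Kglob M hk
    have hposAll : ∀ᵐ ω ∂M.P, ∀ i', 0 ≤ k i' ω + Y i' ω := by
      rw [ae_all_iff]; exact hpos
    have hsum0 : (fun ω => ∑ i', k i' ω) =ᵐ[M.P] (fun _ => (0:ℝ)) := by
      apply hNA _ hsum
      filter_upwards [hposAll, hY.2] with ω h1 h2
      have : ∑ i', (k i' ω + Y i' ω) = ∑ i', k i' ω := by
        rw [Finset.sum_add_distrib, h2, add_zero]
      rw [← this]
      exact Finset.sum_nonneg (fun i' _ => h1 i')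
    filter_upwards [hposAll, hY.2, hsum0] with ω h1 h2 h3
    have hzero : ∑ i', (k i' ω + Y i' ω) = 0 := by
      rw [Finset.sum_add_distrib, h2, add_zero]
      exact h3
    have := (Finset.sum_eq_zero_iff_of_nonneg (fun i' _ => h1 i')).1 hzero
    exact this i (Finset.mem_univ i)

end PartOne
section MainClosed

open scoped Topology
open Set

variable {Ω : Type*} [m0 : MeasurableSpace Ω] (M : Market Ω)

lemma closed_base {s : ℕ} (hs : M.T ≤ s) (ξ : ℕ → Ω → ℝ) (ζ : Ω → ℝ)
    (hbd : ∀ n, ∃ κ ∈ KglobSt M s M.T, ∀ᵐ ω ∂M.P, ξ n ω ≤ κ ω)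
    (hconv : ∀ᵐ ω ∂M.P, Tendsto (fun n => ξ n ω) atTop (𝓝 (ζ ω))) :
    ∃ κ ∈ KglobSt M s M.T, ∀ᵐ ω ∂M.P, ζ ω ≤ κ ω := by
  refine ⟨fun _ => 0, KglobSt_zero M s M.T, ?_⟩
  choose κs hκsK hκsle using hbd
  have hz : ∀ n, ∀ᵐ ω ∂M.P, ξ n ω ≤ 0 := by
    intro n
    have := KglobSt_eq_zero M hs (hκsK n)
    refine (hκsle n).mono (fun ω hω => ?_)
    rw [this] at hω
    exact hω
  rw [← ae_all_iff] at hz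
  filter_upwards [hz, hconv] with ω h1 h2
  exact le_of_tendsto h2 (Eventually.of_forall h1)

theorem closed_Kglob_aux (hNA : NAglob M) :
    ∀ (d s : ℕ), M.T ≤ s + d →
    ∀ (ξ : ℕ → Ω → ℝ) (ζ : Ω → ℝ),
      (∀ n, ∃ κ ∈ KglobSt M s M.T, ∀ᵐ ω ∂M.P, ξ n ω ≤ κ ω) →
      (∀ᵐ ω ∂M.P, Tendsto (fun n => ξ n ω) atTop (𝓝 (ζ ω))) →
      ∃ κ ∈ KglobSt M s M.T, ∀ᵐ ω ∂M.P, ζ ω ≤ κ ω := by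
  classical
  intro d
  induction d with
  | zero =>
    intro s hsd
    exact closed_base M (by omega) 
  | succ d IH =>
    intro s hsd ξ ζ hbd hconv
    by_cases hTs : M.T ≤ s
    · exact closed_base M hTs ξ ζ hbd hconv
    push_neg at hTs
    have IH1 : ∀ (ξ' : ℕ → Ω → ℝ) (ζ' : Ω → ℝ),
        (∀ n, ∃ κ ∈ KglobSt M (s+1) M.T, ∀ᵐ ω ∂M.P, ξ' n ω ≤ κ ω) →
        (∀ᵐ ω ∂M.P, Tendsto (fun n => ξ' n ω) atTop (𝓝 (ζ' ω))) →
        ∃ κ ∈ KglobSt M (s+1) M.T, ∀ᵐ ω ∂M.P, ζ' ω ≤ κ ω :=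
      fun ξ' ζ' => IH (s+1) (by omega) ξ' ζ'
    -- inner induction on the number of coordinates the strategies may use
    have Q : ∀ (m : ℕ) (S : Finset (Fin M.J)), S.card ≤ m →
        ∀ (ξ : ℕ → Ω → ℝ) (ζ : Ω → ℝ) (H : ℕ → Fin M.J → Ω → ℝ) (ζt : ℕ → Ω → ℝ),
        (∀ n j, Measurable[M.F s] (H n j)) →
        (∀ n j ω, j ∉ S → H n j ω = 0) →
        (∀ n, ζt n ∈ KglobSt M (s+1) M.T) →
        (∀ᵐ ω ∂M.P, ∀ n, ξ n ω ≤
          (∑ j, H n j ω * (M.X j (s+1) ω - M.X j s ω)) + ζt n ω) →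
        (∀ᵐ ω ∂M.P, Tendsto (fun n => ξ n ω) atTop (𝓝 (ζ ω))) →
        ∃ κ ∈ KglobSt M s M.T, ∀ᵐ ω ∂M.P, ζ ω ≤ κ ω := by
      intro m
      induction m with
      | zero =>
        intro S hS ξ ζ H ζt hHm hHsupp hζtK hbound hconv
        have hSempty : S = ∅ := Finset.card_eq_zero.mp (Nat.le_zero.mp hS)
        obtain ⟨κ1, hκ1K, hκ1le⟩ := IH1 ξ ζ (fun n => ⟨ζt n, hζtK n, by
          filter_upwards [hbound] with ω hω
          have h0 : ∀ j : Fin M.J, H n j ω = 0 :=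
            fun j => hHsupp n j ω (by simp [hSempty])
          have := hω n
          simpa [h0] using this⟩) hconv
        exact ⟨κ1, KglobSt_mono M (by omega) hκ1K, hκ1le⟩
      | succ m IHm =>
        intro S hS ξ ζ H ζt hHm hHsupp hζtK hbound hconv
        set Δ : Fin M.J → Ω → ℝ := fun j ω => M.X j (s+1) ω - M.X j s ω with hΔ
        have hΔrw : ∀ (j : Fin M.J) (ω : Ω), M.X j (s+1) ω - M.X j s ω = Δ j ω :=
          fun _ _ => rfl
        simp only [hΔrw] at hbound
        set sfn : ℕ → Ω → ℝ := fun n ω => ∑ j, |H n j ω| with hsfn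
        have hsfnm : ∀ n, Measurable[M.F s] (sfn n) :=
          fun n => measurable_sum_abs' (fun j => hHm n j)
        set Ω₁ : Set Ω := {ω | ∃ c : ℕ, ∃ᶠ n in atTop, sfn n ω ≤ (c:ℝ)} with hΩ₁
        have hΩ₁m : MeasurableSet[M.F s] Ω₁ := by
          have h1 : Ω₁ = ⋃ c : ℕ, {ω | ∃ᶠ n in atTop, sfn n ω ≤ (c:ℝ)} := by
            ext ω; simp [hΩ₁]
          rw [h1]
          exact MeasurableSet.iUnion (fun c => measurableSet_frequently_le hsfnm _)
        -- ### branch over Ω₁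
        set H1 : ℕ → Fin M.J → Ω → ℝ := fun n j => Ω₁.indicator (H n j) with hH1
        have hH1m : ∀ n j, Measurable[M.F s] (H1 n j) :=
          fun n j => (hHm n j).indicator hΩ₁m
        obtain ⟨σ1, G1, hσ1m, hσ1sm, hG1m, hG1t⟩ :=
          exists_random_subseq_tendsto (𝓖 := M.F s) H1 hH1m (by
            intro ω
            by_cases hω : ω ∈ Ω₁
            · have hω' := hω
              obtain ⟨c, hc⟩ := hω'
              refine ⟨c, hc.mono (fun n hn => ?_)⟩
              refine le_trans (le_of_eq ?_) hn
              refine Finset.sum_congr rfl (fun j _ => ?_)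
              simp [hH1, Set.indicator_of_mem hω]
            · refine ⟨0, Frequently.of_forall (fun n => ?_)⟩
              have : ∀ j : Fin M.J, H1 n j ω = 0 :=
                fun j => Set.indicator_of_notMem hω _
              simp [this])
        have hG1zero : ∀ (j : Fin M.J) ω, ω ∉ Ω₁ → G1 j ω = 0 := by
          intro j ω hω
          refine tendsto_nhds_unique (hG1t j ω) ?_
          have : ∀ k, H1 (σ1 k ω) j ω = 0 := fun k => Set.indicator_of_notMem hω _
          simp only [this]
          exact tendsto_const_nhds
        set ξ1 : ℕ → Ω → ℝ := fun k =>
          Ω₁.indicator (fun ω => ξ (σ1 k ω) ω - ∑ j, H (σ1 k ω) j ω * Δ j ω) with hξ1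
        set ζt1 : ℕ → Ω → ℝ := fun k ω =>
          (Ω₁.indicator (fun _ => (1:ℝ)) ω) * ζt (σ1 k ω) ω with hζt1
        have hζt1K : ∀ k, ζt1 k ∈ KglobSt M (s+1) M.T := by
          intro k
          exact KglobSt_smul M (by omega) (measurable_indicator' hΩ₁m (measurable_const' 1))
            (KglobSt_randIndex M hζtK (hσ1m k))
        have hbound1 : ∀ᵐ ω ∂M.P, ∀ k, ξ1 k ω ≤ ζt1 k ω := by
          filter_upwards [hbound] with ω hω k
          by_cases hmem : ω ∈ Ω₁
          · simp only [hξ1, hζt1, Set.indicator_of_mem hmem]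
            have := hω (σ1 k ω)
            linarith
          · simp only [hξ1, hζt1, Set.indicator_of_notMem hmem]
            simp
        set ζ1 : Ω → ℝ := Ω₁.indicator (fun ω => ζ ω - ∑ j, G1 j ω * Δ j ω) with hζ1
        have hconv1 : ∀ᵐ ω ∂M.P, Tendsto (fun k => ξ1 k ω) atTop (𝓝 (ζ1 ω)) := by
          filter_upwards [hconv] with ω hω
          by_cases hmem : ω ∈ Ω₁
          · simp only [hξ1, hζ1, Set.indicator_of_mem hmem]
            refine Tendsto.sub (hω.comp ((hσ1sm ω).tendsto_atTop)) ?_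
            refine tendsto_finset_sum _ (fun j _ => ?_)
            have ht : Tendsto (fun k => H (σ1 k ω) j ω) atTop (𝓝 (G1 j ω)) :=
              (hG1t j ω).congr (fun k => Set.indicator_of_mem hmem _)
            exact ht.mul_const (Δ j ω)
          · simp only [hξ1, hζ1, Set.indicator_of_notMem hmem]
            exact tendsto_const_nhds
        obtain ⟨κ1, hκ1K, hκ1le⟩ := IH1 ξ1 ζ1
          (fun k => ⟨ζt1 k, hζt1K k, hbound1.mono (fun ω h => h k)⟩) hconv1
        set κhat1 : Ω → ℝ := fun ω => (∑ j, G1 j ω * Δ j ω) + κ1 ω with hκhat1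
        have hκhat1K : κhat1 ∈ KglobSt M s M.T :=
          KglobSt_add M (KglobSt_oneStep M hTs G1 hG1m) (KglobSt_mono M (by omega) hκ1K)
        have hpart1 : ∀ᵐ ω ∂M.P, Ω₁.indicator ζ ω ≤ κhat1 ω := by
          filter_upwards [hκ1le] with ω h
          by_cases hmem : ω ∈ Ω₁
          · rw [Set.indicator_of_mem hmem]
            simp only [hζ1, Set.indicator_of_mem hmem] at h
            simp only [hκhat1]
            linarith
          · rw [Set.indicator_of_notMem hmem]
            simp only [hζ1, Set.indicator_of_notMem hmem] at h
            simp only [hκhat1]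
            have hz : ∀ j : Fin M.J, G1 j ω = 0 := fun j => hG1zero j ω hmem
            simp only [hz, zero_mul, Finset.sum_const_zero, zero_add]
            linarith
        -- ### branch over Ω₂
        set Ω₂ : Set Ω := Ω₁ᶜ with hΩ₂
        have hΩ₂m : MeasurableSet[M.F s] Ω₂ := hΩ₁m.compl
        have hsfn_top : ∀ ω ∈ Ω₂, Tendsto (fun n => sfn n ω) atTop atTop := by
          intro ω hω
          rw [tendsto_atTop]
          intro b
          have hnot : ¬ ∃ c : ℕ, ∃ᶠ n in atTop, sfn n ω ≤ (c:ℝ) := hω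
          push_neg at hnot
          have := hnot ⌈b⌉₊
          refine this.mono (fun n hn => ?_)
          exact le_of_lt (lt_of_le_of_lt (Nat.le_ceil b) hn)
        set c2 : ℕ → Ω → ℝ := fun n ω => (max (sfn n ω) 1)⁻¹ with hc2
        have hc2m : ∀ n, Measurable[M.F s] (c2 n) :=
          fun n => ((hsfnm n).max measurable_const).inv
        have hc2nonneg : ∀ n ω, 0 ≤ c2 n ω := by
          intro n ω
          simp only [hc2]
          positivity
        have hmaxpos : ∀ n ω, (0:ℝ) < max (sfn n ω) 1 :=
          fun n ω => lt_of_lt_of_le one_pos (le_max_right _ _)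
        set H2 : ℕ → Fin M.J → Ω → ℝ := fun n j =>
          Ω₂.indicator (fun ω => c2 n ω * H n j ω) with hH2
        have hH2m : ∀ n j, Measurable[M.F s] (H2 n j) :=
          fun n j => ((hc2m n).mul (hHm n j)).indicator hΩ₂m
        have hH2sum : ∀ n ω, ω ∈ Ω₂ → ∑ j, |H2 n j ω| = c2 n ω * sfn n ω := by
          intro n ω hω
          simp only [hsfn, hH2, Set.indicator_of_mem hω, Finset.mul_sum]
          refine Finset.sum_congr rfl (fun j _ => ?_)
          rw [abs_mul, abs_of_nonneg (hc2nonneg n ω)]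
        have hH2bd : ∀ n ω, ∑ j, |H2 n j ω| ≤ 1 := by
          intro n ω
          by_cases hω : ω ∈ Ω₂
          · rw [hH2sum n ω hω]
            simp only [hc2]
            have h1 : sfn n ω ≤ max (sfn n ω) 1 := le_max_left _ _
            have h2 := hmaxpos n ω
            rw [inv_mul_le_iff₀ h2]
            simpa using h1
          · have : ∀ j : Fin M.J, H2 n j ω = 0 := fun j => Set.indicator_of_notMem hω _
            simp [this]
        obtain ⟨σ2, G2, hσ2m, hσ2sm, hG2m, hG2t⟩ :=
          exists_random_subseq_tendsto (𝓖 := M.F s) H2 hH2m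
            (fun ω => ⟨1, Frequently.of_forall (fun n => hH2bd n ω)⟩)
        have hG2zero : ∀ (j : Fin M.J) ω, ω ∉ Ω₂ → G2 j ω = 0 := by
          intro j ω hω
          refine tendsto_nhds_unique (hG2t j ω) ?_
          have : ∀ k, H2 (σ2 k ω) j ω = 0 := fun k => Set.indicator_of_notMem hω _
          simp only [this]
          exact tendsto_const_nhds
        have hG2supp : ∀ (j : Fin M.J) ω, j ∉ S → G2 j ω = 0 := by
          intro j ω hj
          refine tendsto_nhds_unique (hG2t j ω) ?_
          have : ∀ k, H2 (σ2 k ω) j ω = 0 := by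
            intro k
            simp only [hH2]
            by_cases hω : ω ∈ Ω₂
            · rw [Set.indicator_of_mem hω]
              rw [hHsupp (σ2 k ω) j ω hj, mul_zero]
            · exact Set.indicator_of_notMem hω _
          simp only [this]
          exact tendsto_const_nhds
        have hG2norm : ∀ ω ∈ Ω₂, ∑ j, |G2 j ω| = 1 := by
          intro ω hω
          have h1 : Tendsto (fun k => ∑ j, |H2 (σ2 k ω) j ω|) atTop
              (𝓝 (∑ j, |G2 j ω|)) :=
            tendsto_finset_sum _ (fun j _ => (hG2t j ω).abs)
          have hst : Tendsto (fun k => sfn (σ2 k ω) ω) atTop atTop :=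
            (hsfn_top ω hω).comp ((hσ2sm ω).tendsto_atTop)
          have h2 : ∀ᶠ k in atTop, ∑ j, |H2 (σ2 k ω) j ω| = 1 := by
            filter_upwards [hst.eventually_ge_atTop 1] with k hk
            rw [hH2sum _ ω hω]
            simp only [hc2]
            rw [max_eq_left hk]
            exact inv_mul_cancel₀ (ne_of_gt (lt_of_lt_of_le one_pos hk))
          have h3 : Tendsto (fun k => ∑ j, |H2 (σ2 k ω) j ω|) atTop (𝓝 1) := by
            rw [tendsto_congr' h2]
            exact tendsto_const_nhds
          exact tendsto_nhds_unique h1 h3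
        set φ2 : ℕ → Ω → ℝ := fun k =>
          Ω₂.indicator (fun ω => c2 (σ2 k ω) ω * ξ (σ2 k ω) ω
            - ∑ j, H2 (σ2 k ω) j ω * Δ j ω) with hφ2
        set ζt2 : ℕ → Ω → ℝ := fun k ω =>
          (Ω₂.indicator (fun ω' => c2 (σ2 k ω') ω') ω) * ζt (σ2 k ω) ω with hζt2
        have hζt2K : ∀ k, ζt2 k ∈ KglobSt M (s+1) M.T := by
          intro k
          refine KglobSt_smul M (by omega)
            ((measurable_comp_index (fun n => hc2m n) (hσ2m k)).indicator hΩ₂m)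
            (KglobSt_randIndex M hζtK (hσ2m k))
        have hbound2 : ∀ᵐ ω ∂M.P, ∀ k, φ2 k ω ≤ ζt2 k ω := by
          filter_upwards [hbound] with ω hω k
          by_cases hmem : ω ∈ Ω₂
          · simp only [hφ2, hζt2, Set.indicator_of_mem hmem]
            have hsum : ∑ j, H2 (σ2 k ω) j ω * Δ j ω
                = c2 (σ2 k ω) ω * ∑ j, H (σ2 k ω) j ω * Δ j ω := by
              rw [Finset.mul_sum]
              refine Finset.sum_congr rfl (fun j _ => ?_)
              simp only [hH2, Set.indicator_of_mem hmem]
              ring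
            rw [hsum]
            have hb := hω (σ2 k ω)
            have hc := hc2nonneg (σ2 k ω) ω
            nlinarith [mul_le_mul_of_nonneg_left hb hc]
          · simp only [hφ2, hζt2, Set.indicator_of_notMem hmem]
            simp
        set φ2lim : Ω → ℝ := fun ω => - ∑ j, G2 j ω * Δ j ω with hφ2lim
        have hconv2 : ∀ᵐ ω ∂M.P, Tendsto (fun k => φ2 k ω) atTop (𝓝 (φ2lim ω)) := by
          filter_upwards [hconv] with ω hω
          by_cases hmem : ω ∈ Ω₂
          · simp only [hφ2, hφ2lim, Set.indicator_of_mem hmem]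
            have hc2to : Tendsto (fun k => c2 (σ2 k ω) ω) atTop (𝓝 0) := by
              simp only [hc2]
              refine Tendsto.comp tendsto_inv_atTop_zero ?_
              refine tendsto_atTop_mono (fun k => le_max_left _ _) ?_
              exact (hsfn_top ω hmem).comp ((hσ2sm ω).tendsto_atTop)
            have hterm1 : Tendsto (fun k => c2 (σ2 k ω) ω * ξ (σ2 k ω) ω) atTop (𝓝 0) := by
              have := hc2to.mul (hω.comp ((hσ2sm ω).tendsto_atTop))
              simpa using this
            have hterm2 : Tendsto (fun k => ∑ j, H2 (σ2 k ω) j ω * Δ j ω) atTop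
                (𝓝 (∑ j, G2 j ω * Δ j ω)) :=
              tendsto_finset_sum _ (fun j _ => (hG2t j ω).mul_const (Δ j ω))
            have := hterm1.sub hterm2
            simpa using this
          · simp only [hφ2, hφ2lim, Set.indicator_of_notMem hmem]
            have hz : ∀ j : Fin M.J, G2 j ω = 0 := fun j => hG2zero j ω hmem
            simp only [hz, zero_mul, Finset.sum_const_zero, neg_zero]
            exact tendsto_const_nhds
        obtain ⟨κ2, hκ2K, hκ2le⟩ := IH1 φ2 φ2lim
          (fun k => ⟨ζt2 k, hζt2K k, hbound2.mono (fun ω h => h k)⟩) hconv2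
        have hχK : (fun ω => (∑ j, G2 j ω * Δ j ω) + κ2 ω) ∈ Kglob M := by
          refine KglobSt_mono M (Nat.zero_le s) ?_
          exact KglobSt_add M (KglobSt_oneStep M hTs G2 hG2m)
            (KglobSt_mono M (by omega) hκ2K)
        have hχ0 : (fun ω => (∑ j, G2 j ω * Δ j ω) + κ2 ω) =ᵐ[M.P] (fun _ => (0:ℝ)) := by
          refine hNA _ hχK ?_
          filter_upwards [hκ2le] with ω h
          simp only [hφ2lim] at h
          linarith
        have hGflat : ∀ᵐ ω ∂M.P, ∑ j, G2 j ω * Δ j ω = - κ2 ω := by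
          filter_upwards [hχ0] with ω h
          have : (∑ j, G2 j ω * Δ j ω) + κ2 ω = 0 := h
          linarith
        -- partition of Ω₂
        set Ω2j : Fin M.J → Set Ω := fun j =>
          Ω₂ ∩ {ω | G2 j ω ≠ 0 ∧ ∀ j' ∈ S, j' < j → G2 j' ω = 0} with hΩ2j
        have hΩ2jm : ∀ j, MeasurableSet[M.F s] (Ω2j j) := by
          intro j
          refine hΩ₂m.inter ?_
          have : {ω | G2 j ω ≠ 0 ∧ ∀ j' ∈ S, j' < j → G2 j' ω = 0}
              = ((G2 j) ⁻¹' {0})ᶜ ∩ ⋂ j', ⋂ (_ : j' ∈ S), ⋂ (_ : j' < j), (G2 j') ⁻¹' {0} := by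
            ext ω
            simp [Set.mem_iInter]
          rw [this]
          refine MeasurableSet.inter ((hG2m j (measurableSet_singleton 0)).compl) ?_
          exact MeasurableSet.iInter (fun j' => MeasurableSet.iInter (fun _ =>
            MeasurableSet.iInter (fun _ => hG2m j' (measurableSet_singleton 0))))
        have hΩ2jsub : ∀ j, Ω2j j ⊆ Ω₂ := fun j => Set.inter_subset_left
        have hcover2 : ∀ ω ∈ Ω₂, ∃ j ∈ S, ω ∈ Ω2j j := by
          intro ω hω
          have hexj : ∃ j ∈ S, G2 j ω ≠ 0 := by
            by_contra hcon
            push_neg at hcon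
            have : ∑ j, |G2 j ω| = 0 := by
              refine Finset.sum_eq_zero (fun j _ => ?_)
              by_cases hj : j ∈ S
              · rw [hcon j hj, abs_zero]
              · rw [hG2supp j ω hj, abs_zero]
            rw [hG2norm ω hω] at this
            norm_num at this
          set T' : Finset (Fin M.J) := S.filter (fun j => G2 j ω ≠ 0) with hT'
          have hT'ne : T'.Nonempty := by
            obtain ⟨j, hj1, hj2⟩ := hexj
            exact ⟨j, Finset.mem_filter.mpr ⟨hj1, hj2⟩⟩
          set j₀ := T'.min' hT'ne with hj₀
          have hj₀mem := T'.min'_mem hT'ne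
          rw [Finset.mem_filter] at hj₀mem
          refine ⟨j₀, hj₀mem.1, hω, hj₀mem.2, ?_⟩
          intro j' hj'S hj'lt
          by_contra hne
          have : j₀ ≤ j' := Finset.min'_le T' j' (Finset.mem_filter.mpr ⟨hj'S, hne⟩)
          exact absurd hj'lt (not_lt.mpr this)
        have hdecomp : ∀ ω, ζ ω = Ω₁.indicator ζ ω + ∑ j ∈ S, (Ω2j j).indicator ζ ω := by
          intro ω
          by_cases hmem : ω ∈ Ω₁
          · rw [Set.indicator_of_mem hmem]
            have : ∀ j ∈ S, (Ω2j j).indicator ζ ω = 0 := by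
              intro j _
              refine Set.indicator_of_notMem (fun hc => ?_) _
              exact (hΩ2jsub j hc) hmem
            rw [Finset.sum_eq_zero this, add_zero]
          · rw [Set.indicator_of_notMem hmem, zero_add]
            have hω2 : ω ∈ Ω₂ := hmem
            obtain ⟨j₀, hj₀S, hj₀mem⟩ := hcover2 ω hω2
            rw [Finset.sum_eq_single_of_mem j₀ hj₀S]
            · rw [Set.indicator_of_mem hj₀mem]
            · intro j hjS hjne
              refine Set.indicator_of_notMem (fun hc => ?_) _
              rcases lt_or_gt_of_ne hjne with hlt | hgt
              · exact hc.2.1 (hj₀mem.2.2 j hjS hlt)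
              · exact hj₀mem.2.1 (hc.2.2 j₀ hj₀S hgt)
        -- recursive elimination of coordinate j on Ω2j j
        have hrec : ∀ j ∈ S, ∃ κ ∈ KglobSt M s M.T,
            ∀ᵐ ω ∂M.P, (Ω2j j).indicator ζ ω ≤ κ ω := by
          intro j hjS
          set q : ℕ → Ω → ℝ := fun n ω => H n j ω / G2 j ω with hq
          have hqm : ∀ n, Measurable[M.F s] (q n) := fun n => (hHm n j).div (hG2m j)
          set Hj : ℕ → Fin M.J → Ω → ℝ := fun n j' =>
            (Ω2j j).indicator (fun ω => H n j' ω - q n ω * G2 j' ω) with hHj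
          have hHjm : ∀ n j', Measurable[M.F s] (Hj n j') :=
            fun n j' => (((hHm n j').sub ((hqm n).mul (hG2m j')))).indicator (hΩ2jm j)
          have hHjsupp : ∀ n j' ω, j' ∉ S.erase j → Hj n j' ω = 0 := by
            intro n j' ω hj'
            simp only [hHj]
            by_cases hmem : ω ∈ Ω2j j
            · rw [Set.indicator_of_mem hmem]
              have hcases : j' = j ∨ j' ∉ S := by
                by_cases h1 : j' ∈ S
                · left
                  by_contra hne
                  exact hj' (Finset.mem_erase.mpr ⟨hne, h1⟩)
                · right; exact h1
              rcases hcases with rfl | hout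
              · have hne : G2 j' ω ≠ 0 := hmem.2.1
                simp only [hq]
                rw [div_mul_cancel₀ _ hne, sub_self]
              · rw [hHsupp n j' ω hout, hG2supp j' ω hout, mul_zero, sub_zero]
            · exact Set.indicator_of_notMem hmem _
          set ζtj : ℕ → Ω → ℝ := fun n ω =>
            ((Ω2j j).indicator (fun _ => (1:ℝ)) ω) * ζt n ω
              + (-((Ω2j j).indicator (q n) ω)) * κ2 ω with hζtj
          have hζtjK : ∀ n, ζtj n ∈ KglobSt M (s+1) M.T := by
            intro n
            refine KglobSt_add M ?_ ?_
            · exact KglobSt_smul M (by omega) (measurable_indicator' (hΩ2jm j) (measurable_const' 1)) (hζtK n)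
            · exact KglobSt_smul M (by omega)
                ((measurable_indicator' (hΩ2jm j) (hqm n)).neg) (KglobSt_mono M le_rfl hκ2K)
          set ξj : ℕ → Ω → ℝ := fun n => (Ω2j j).indicator (ξ n) with hξj
          have hboundj : ∀ᵐ ω ∂M.P, ∀ n, ξj n ω ≤
              (∑ j', Hj n j' ω * (M.X j' (s+1) ω - M.X j' s ω)) + ζtj n ω := by
            filter_upwards [hbound, hGflat] with ω hb hflat n
            by_cases hmem : ω ∈ Ω2j j
            · simp only [hξj, hHj, hζtj, Set.indicator_of_mem hmem]
              have hsum : ∑ j', (H n j' ω - q n ω * G2 j' ω) * Δ j' ω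
                  = (∑ j', H n j' ω * Δ j' ω) - q n ω * ∑ j', G2 j' ω * Δ j' ω := by
                rw [Finset.mul_sum, ← Finset.sum_sub_distrib]
                exact Finset.sum_congr rfl (fun j' _ => by ring)
              have hΔrw : ∀ j' : Fin M.J, M.X j' (s+1) ω - M.X j' s ω = Δ j' ω :=
                fun j' => rfl
              simp only [hΔrw]
              rw [hsum, hflat]
              have hthis := hb n
              linarith
            · simp only [hξj, hHj, hζtj, Set.indicator_of_notMem hmem]
              simp
          have hconvj : ∀ᵐ ω ∂M.P, Tendsto (fun n => ξj n ω) atTop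
              (𝓝 ((Ω2j j).indicator ζ ω)) := by
            filter_upwards [hconv] with ω hω
            by_cases hmem : ω ∈ Ω2j j
            · simpa only [hξj, Set.indicator_of_mem hmem] using hω
            · simp only [hξj, Set.indicator_of_notMem hmem]
              exact tendsto_const_nhds
          have hcard' : (S.erase j).card ≤ m := by
            rw [Finset.card_erase_of_mem hjS]
            omega
          exact IHm (S.erase j) hcard' ξj ((Ω2j j).indicator ζ) Hj ζtj hHjm hHjsupp
            hζtjK hboundj hconvj
        choose κs hκsK hκsle using hrec
        refine ⟨fun ω => κhat1 ω + ∑ x ∈ S.attach, κs x.1 x.2 ω,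
          KglobSt_add M hκhat1K (KglobSt_sum M S.attach (fun x _ => hκsK x.1 x.2)), ?_⟩
        have hae : ∀ᵐ ω ∂M.P, ∀ x : {j // j ∈ S},
            (Ω2j x.1).indicator ζ ω ≤ κs x.1 x.2 ω := by
          rw [ae_all_iff]
          exact fun x => hκsle x.1 x.2
        filter_upwards [hpart1, hae] with ω h1 h2
        rw [hdecomp ω]
        have hsum_le : ∑ j ∈ S, (Ω2j j).indicator ζ ω ≤ ∑ x ∈ S.attach, κs x.1 x.2 ω := by
          rw [← Finset.sum_attach S (fun j => (Ω2j j).indicator ζ ω)]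
          exact Finset.sum_le_sum (fun x _ => h2 x)
        linarith
    -- conclude the inductive step using the inner induction with all coordinates
    choose κs' hκ'K hκ'le using hbd
    have hdec := fun n => KglobSt_decomp M hTs (hκ'K n)
    choose HH tails hHHm htailsK heq using hdec
    have hboundP : ∀ᵐ ω ∂M.P, ∀ n, ξ n ω ≤
        (∑ j, HH n j ω * (M.X j (s+1) ω - M.X j s ω)) + tails n ω := by
      rw [ae_all_iff]
      intro n
      filter_upwards [hκ'le n] with ω hω
      calc ξ n ω ≤ κs' n ω := hω
        _ = _ := by simp only [heq n]
    exact Q M.J Finset.univ (by simp) ξ ζ HH tails hHHm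
      (fun n j ω hj => absurd (Finset.mem_univ j) hj) htailsK hboundP hconv

end MainClosed
section FinalAssembly

open scoped Topology

variable {Ω : Type*} [m0 : MeasurableSpace Ω] (M : Market Ω)

lemma exists_subseq_ae_tendsto_all {N : ℕ} {μ : Measure Ω}
    {f : ℕ → Fin N → Ω → ℝ} {g : Fin N → Ω → ℝ}
    (h : ∀ i, TendstoInMeasure μ (fun n => f n i) atTop (g i)) :
    ∃ φ : ℕ → ℕ, StrictMono φ ∧
      ∀ i, ∀ᵐ ω ∂μ, Tendsto (fun k => f (φ k) i ω) atTop (𝓝 (g i ω)) := by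
  have main : ∀ n : ℕ, ∃ φ : ℕ → ℕ, StrictMono φ ∧
      ∀ i : Fin N, (i : ℕ) < n →
        ∀ᵐ ω ∂μ, Tendsto (fun k => f (φ k) i ω) atTop (𝓝 (g i ω)) := by
    intro n
    induction n with
    | zero => exact ⟨id, strictMono_id, fun i hi => absurd hi (by omega)⟩
    | succ n ih =>
      obtain ⟨φ, hφ, hconv⟩ := ih
      by_cases hn : n < N
      · set i0 : Fin N := ⟨n, hn⟩ with hi0
        have h1 : TendstoInMeasure μ (fun k => f (φ k) i0) atTop (g i0) :=
          fun ε hε => ((h i0) ε hε).comp hφ.tendsto_atTop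
        obtain ⟨ψ, hψ, haeψ⟩ := h1.exists_seq_tendsto_ae
        refine ⟨φ ∘ ψ, hφ.comp hψ, fun i hi => ?_⟩
        by_cases hin : (i : ℕ) < n
        · exact (hconv i hin).mono (fun ω hω => hω.comp hψ.tendsto_atTop)
        · have : i = i0 := Fin.ext (by simp only [hi0]; omega)
          subst this
          exact haeψ
      · exact ⟨φ, hφ, fun i hi => hconv i (by have := i.2; omega)⟩
  obtain ⟨φ, hφ, hconv⟩ := main N
  exact ⟨φ, hφ, fun i => hconv i i.2⟩

lemma KY_measurable {f : Fin M.N → Ω → ℝ} (hf : f ∈ KY M (Y0 M)) (i : Fin M.N) :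
    Measurable (f i) := by
  obtain ⟨k, l, Y, hk, hl, hY, hfe⟩ := hf
  rw [hfe]
  refine ((Ki_measurable M (hk i)).sub
    (((hl i).1).mono ((M.Fi_le i M.T).trans (le_of_eq M.F_top)) le_rfl)).add ?_
  exact (hY.1 i).mono ((M.Fi_le i M.T).trans (le_of_eq M.F_top)) le_rfl

theorem closedInProb_KY (hcommon : ∀ i, M.Fi i = M.F) (hcover : ∀ j, ∃ i, j ∈ M.assets i)
    (hNA : NAglob M) : ClosedInProb M (KY M (Y0 M)) := by
  classical
  intro f g hfKY hconvP
  -- bound the componentwise sums by global gains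
  have hbd : ∀ n, ∃ κ ∈ KglobSt M 0 M.T, ∀ᵐ ω ∂M.P, (∑ i, f n i ω) ≤ κ ω := by
    intro n
    obtain ⟨k, l, Y, hk, hl, hYmem, hfe⟩ := hfKY n
    refine ⟨fun ω => ∑ i, k i ω, sum_Ki_mem_Kglob M hk, ?_⟩
    have hlpos : ∀ᵐ ω ∂M.P, ∀ i, 0 ≤ l i ω := ae_all_iff.2 (fun i => (hl i).2)
    filter_upwards [hlpos, hYmem.2] with ω h1 h2
    simp only [hfe]
    have : ∑ i, (k i ω - l i ω + Y i ω)
        = (∑ i, k i ω) - (∑ i, l i ω) + ∑ i, Y i ω := by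
      rw [Finset.sum_add_distrib, Finset.sum_sub_distrib]
    rw [this, h2, add_zero]
    have : 0 ≤ ∑ i, l i ω := Finset.sum_nonneg (fun i _ => h1 i)
    linarith
  obtain ⟨φ, hφ, hae⟩ := exists_subseq_ae_tendsto_all (μ := M.P) hconvP
  have haeAll : ∀ᵐ ω ∂M.P, ∀ i, Tendsto (fun k => f (φ k) i ω) atTop (𝓝 (g i ω)) :=
    ae_all_iff.2 hae
  have hsumconv : ∀ᵐ ω ∂M.P,
      Tendsto (fun k => ∑ i, f (φ k) i ω) atTop (𝓝 (∑ i, g i ω)) :=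
    haeAll.mono (fun ω hω => tendsto_finset_sum _ (fun i _ => hω i))
  obtain ⟨κ, hκK, hκle⟩ := closed_Kglob_aux M hNA M.T 0 (by omega)
    (fun k ω => ∑ i, f (φ k) i ω) (fun ω => ∑ i, g i ω)
    (fun k => hbd (φ k)) hsumconv
  -- measurable representatives of the limits
  have hgm : ∀ i, ∃ gi' : Ω → ℝ, Measurable gi' ∧ g i =ᵐ[M.P] gi' := by
    intro i
    have hfm : ∀ n, Measurable (f n i) := fun n => KY_measurable M (hfKY n) i
    have hmk := aemeasurable_of_tendsto_metrizable_ae atTop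
      (fun k => (hfm (φ k)).aemeasurable) (hae i)
    exact ⟨hmk.mk _, hmk.measurable_mk, hmk.ae_eq_mk⟩
  choose g' hg'm hg'ae using hgm
  have hκm : Measurable κ := KglobSt_measurable M hκK
  -- decompose κ into agents' gains
  obtain ⟨kk, hkkK, hkke⟩ := Kglob_decomp_Ki M hcommon hcover hκK
  set i0 : Fin M.N := ⟨0, M.hN⟩ with hi0
  set l : Fin M.N → Ω → ℝ :=
    fun i => if i = i0 then (fun ω => κ ω - ∑ i', g' i' ω) else fun _ => 0 with hl
  set Y : Fin M.N → Ω → ℝ := fun i ω => g' i ω - kk i ω + l i ω with hY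
  have hlm : ∀ i, Measurable (l i) := by
    intro i
    by_cases hi : i = i0
    · simp only [hl, hi, if_true]
      exact hκm.sub (Finset.measurable_sum _ (fun i' _ => hg'm i'))
    · simp only [hl, hi, if_false]
      exact measurable_const
  have hsumg' : (fun ω => ∑ i', g' i' ω) =ᵐ[M.P] (fun ω => ∑ i', g i' ω) := by
    have := ae_all_iff.2 hg'ae
    filter_upwards [this] with ω hω
    exact (Finset.sum_congr rfl (fun i' _ => (hω i').symm))
  refine ⟨g', ⟨kk, l, Y, hkkK, ?_, ?_, ?_⟩, fun i => hg'ae i⟩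
  · intro i
    constructor
    · rw [hcommon i, M.F_top]
      exact hlm i
    · by_cases hi : i = i0
      · simp only [hl, hi, if_true]
        filter_upwards [hκle, hsumg'] with ω h1 h2
        rw [h2]
        linarith [h1]
      · simp only [hl, hi, if_false]
        exact Eventually.of_forall (fun ω => le_refl 0)
  · constructor
    · intro i
      rw [hcommon i, M.F_top]
      exact ((hg'm i).sub (Ki_measurable M (hkkK i))).add (hlm i)
    · refine Eventually.of_forall (fun ω => ?_)
      have hsl : ∑ i, l i ω = κ ω - ∑ i', g' i' ω := by
        have : ∀ i : Fin M.N, l i ω = if i = i0 then κ ω - ∑ i', g' i' ω else 0 := by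
          intro i
          by_cases hi : i = i0 <;> simp [hl, hi]
        simp only [this]
        rw [Finset.sum_ite_eq' Finset.univ i0 (fun _ => κ ω - ∑ i', g' i' ω)]
        simp
      simp only [hY]
      rw [Finset.sum_add_distrib, Finset.sum_sub_distrib, hsl, ← hkke ω]
      ring
  · funext i ω
    simp only [hY]
    ring

end FinalAssembly
/-- with a common filtration and the full zero-sum exchange set `𝒴₀`,
`NCA(𝒴₀)` is equivalent to global `NA`, and under these equivalent conditions
`K^{𝒴₀}` is closed in probability. -/
theorem ncaY0_iff_na_and_closed (hcommon : ∀ i, M.Fi i = M.F)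
    (hcover : ∀ j, ∃ i, j ∈ M.assets i) :
    (NCA M (Y0 M) ↔ NAglob M) ∧
    (NCA M (Y0 M) → ClosedInProb M (KY M (Y0 M))) := by
  refine ⟨nca_iff_naglob M hcommon hcover, fun hNCA => ?_⟩
  exact closedInProb_KY M hcommon hcover ((nca_iff_naglob M hcommon hcover).1 hNCA)

end Collective
end
end
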